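/- arXiv:1707.00366 — 5 statements merged into one kernel-verified Lean document; each statement's English description precedes it below -/
import Mathlib

section
/- For all a ∈ ℕ and L ≥ 1, if L ≥ ⌊a/2⌋ then Φ(a, L) = ⌊a/2⌋. -/
/-- `f x = max {y : ℕ | y * (y + 1) ≤ x}`. -/
def f (x : ℕ) : ℕ := Nat.findGreatest (fun y => y * (y + 1) ≤ x) x

/-- `Phi a L = max {f a₁ + ⋯ + f a_L : a₁ + ⋯ + a_L ≤ a}`. -/
noncomputable def Phi (a L : ℕ) : ℕ :=
  sSup {s | ∃ g : Fin L → ℕ, (∑ i, g i) ≤ a ∧ s = ∑ i, f (g i)}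

lemma f_zero : f 0 = 0 := rfl

lemma f_two : f 2 = 1 := by decide

lemma two_mul_f_le (x : ℕ) : 2 * f x ≤ x := by
  rcases Nat.eq_zero_or_pos (f x) with hzero | hpos
  · simp [hzero]
  · have hspec : f x * (f x + 1) ≤ x :=
      Nat.findGreatest_of_ne_zero (P := fun y => y * (y + 1) ≤ x) rfl hpos.ne'
    calc 2 * f x ≤ (f x + 1) * f x := Nat.mul_le_mul_right _ (by omega)
      _ ≤ x := by rwa [mul_comm]

lemma sum_f_le_half {L a : ℕ} {g : Fin L → ℕ} (hg : ∑ i, g i ≤ a) :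
    ∑ i, f (g i) ≤ a / 2 := by
  rw [Nat.le_div_iff_mul_le two_pos, Finset.sum_mul]
  calc ∑ i, f (g i) * 2 ≤ ∑ i, g i :=
        Finset.sum_le_sum fun i _ => (mul_comm _ _).trans_le (two_mul_f_le (g i))
    _ ≤ a := hg

lemma Phi_le_half (a L : ℕ) : Phi a L ≤ a / 2 :=
  csSup_le ⟨0, fun _ => 0, by simp, by simp [f_zero]⟩ (by rintro _ ⟨g, hg, rfl⟩; exact sum_f_le_half hg)

lemma sum_f_le_Phi {L a : ℕ} {g : Fin L → ℕ} (hg : ∑ i, g i ≤ a) : ∑ i, f (g i) ≤ Phi a L :=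
  le_csSup ⟨a / 2, by rintro _ ⟨g, hg, rfl⟩; exact sum_f_le_half hg⟩ ⟨g, hg, rfl⟩

lemma Fin.sum_ite_val_lt {M : Type*} [AddCommMonoid M] {L k : ℕ} (hk : k ≤ L) (c : M) :
    ∑ i : Fin L, (if (i : ℕ) < k then c else 0) = k • c := by
  rw [Finset.sum_ite, Finset.sum_const_zero, add_zero, Finset.sum_const, Fin.card_filter_val_lt,
    min_eq_right hk]

theorem Phi_eq_half_of_le_general (a L : ℕ) (h : a / 2 ≤ L) : Phi a L = a / 2 := by
  -- Equality is attained by `a / 2` parts equal to `2`, each contributing `f 2 = 1`.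
  have hsum : ∑ i : Fin L, (if (i : ℕ) < a / 2 then 2 else 0) ≤ a := by
    rw [Fin.sum_ite_val_lt h, smul_eq_mul]
    omega
  have hle := sum_f_le_Phi hsum
  simp only [apply_ite f, f_two, f_zero] at hle
  rw [Fin.sum_ite_val_lt h, smul_eq_mul, mul_one] at hle
  exact (Phi_le_half a L).antisymm hle

theorem Phi_eq_half_of_le (a L : ℕ) (hL : 1 ≤ L) (h : a / 2 ≤ L) : Phi a L = a / 2 :=
  Phi_eq_half_of_le_general a L h
end

section
/- For every natural number n ≥ 1 and every prime p, there exists an irreducible character χ of the symmetric group S_n of degree coprime to p such that the restriction of χ to S_{n-1} has at least one irreducible constituent of degree coprime to p. Equivalently, br(n) ≥ 1, i.e., for every p'-partition λ of n, the set λ⁻_{p'} of p'-partitions obtained from λ by removing one node is nonempty. -/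
/-!
The hook length formula satisfies the branching rule `f^λ = ∑_{μ ∈ λ⁻} f^μ`. So if `p` divided
`f^μ` for every `μ ∈ λ⁻`, it would divide `f^λ`: every `p'`-partition `λ` of `n ≥ 1` has a
`p'`-partition in `λ⁻`, and the one-row partition, with `f = 1`, is a `p'`-partition of `n`.

The branching rule is proved with the `β`-numbers `β_i = λ_i + K - 1 - i` (`i < K`), for which the
hook length formula reads `∏ β_i! = H(λ) ∏_{i < j} (β_i - β_j)`. Removing the corner of row `r`
lowers `β_r` by one, so that `H(λ) / H(λ - r) = β_r ∏_{j ≠ r} (β_r - 1 - β_j) / (β_r - β_j)`, and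
Lagrange interpolation at the nodes `β_i` shows that these ratios add up to
`∑ β_i - K(K - 1)/2 = n`.
-/

/-- The hook length of the cell `(i, j)` of a Young diagram. -/
def hookLength (Y : YoungDiagram) (i j : ℕ) : ℕ :=
  Y.rowLen i + Y.colLen j - i - j - 1

/-- The degree of the irreducible character `χ^λ` of the symmetric group,
given by the hook length formula. -/
def charDegree (Y : YoungDiagram) : ℕ :=
  Y.card.factorial / ∏ c ∈ Y.cells, hookLength Y c.1 c.2

/-- `λ` is a `p'`-partition: the degree of `χ^λ` is coprime to `p`. -/
def CoprimeDeg (p : ℕ) (Y : YoungDiagram) : Prop := ¬ p ∣ charDegree Y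

/-- `λ⁻`: the set of partitions obtained from `λ` by removing one node. -/
def Yminus (Y : YoungDiagram) : Set YoungDiagram :=
  {Z | Z.cells ⊆ Y.cells ∧ Z.card + 1 = Y.card}

/-- `λ⁻_{p'}`: the `p'`-partitions obtained from `λ` by removing one node. -/
def YminusP (p : ℕ) (Y : YoungDiagram) : Set YoungDiagram :=
  {Z | Z ∈ Yminus Y ∧ CoprimeDeg p Z}

/-- `br n = max {|λ⁻_{p'}| : λ a p'-partition of n}`. -/
noncomputable def br (p n : ℕ) : ℕ :=
  sSup {m | ∃ Y : YoungDiagram, Y.card = n ∧ CoprimeDeg p Y ∧ m = (YminusP p Y).ncard}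

/-- `Z` is obtained from `Y` by removing a border strip (rim hook) of size `e`:
the removed cells occupy `e` consecutive diagonals, one cell on each. -/
def RemoveHook (e : ℕ) (Y Z : YoungDiagram) : Prop :=
  Z.cells ⊆ Y.cells ∧ Z.card + e = Y.card ∧
    (∃ d : ℤ, ∀ c ∈ Y.cells, c ∉ Z.cells →
      d ≤ (c.2 : ℤ) - (c.1 : ℤ) ∧ (c.2 : ℤ) - (c.1 : ℤ) < d + e) ∧
    ∀ c ∈ Y.cells, ∀ c' ∈ Y.cells, c ∉ Z.cells → c' ∉ Z.cells →
      (c.2 : ℤ) - (c.1 : ℤ) = (c'.2 : ℤ) - (c'.1 : ℤ) → c = c'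

/-- `Y` is an `e`-core: no hook of length `e` can be removed. -/
def IsECore (e : ℕ) (Y : YoungDiagram) : Prop := ∀ Z, ¬ RemoveHook e Y Z

/-- `Z = C_e(Y)`: `Z` is obtained from `Y` by successively removing `e`-hooks and
`Z` is an `e`-core. -/
def CoreOf (e : ℕ) (Y Z : YoungDiagram) : Prop :=
  Relation.ReflTransGen (RemoveHook e) Y Z ∧ IsECore e Z

open Polynomial Finset
open scoped Nat

namespace Polynomial

variable {R : Type*} [CommRing R]

theorem coeff_comp_X_add_C_eq_sum (p : R[X]) (a : R) {N : ℕ} (hN : p.natDegree < N) (t : ℕ) :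
    (p.comp (X + C a)).coeff t = ∑ m ∈ range N, p.coeff m * (a ^ (m - t) * m.choose t) := by
  rw [comp_eq_sum_left, sum_over_range' _ (by simp) N hN, finsetSum_coeff]
  exact sum_congr rfl fun m _ => by rw [coeff_C_mul, coeff_X_add_C_pow]

theorem coeff_comp_X_add_C_of_natDegree_le {p : R[X]} (a : R) {k : ℕ} (hp : p.natDegree ≤ k + 2) :
    (p.comp (X + C a)).coeff (k + 2) = p.coeff (k + 2) ∧
    (p.comp (X + C a)).coeff (k + 1) = p.coeff (k + 1) + (k + 2) * a * p.coeff (k + 2) ∧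
    (p.comp (X + C a)).coeff k =
      p.coeff k + (k + 1) * a * p.coeff (k + 1) + (k + 2).choose 2 * a ^ 2 * p.coeff (k + 2) := by
  have hsum (t : ℕ) (ht : k ≤ t) : (p.comp (X + C a)).coeff t =
      ∑ m ∈ range 3, p.coeff (k + m) * (a ^ (k + m - t) * (k + m).choose t) := by
    rw [coeff_comp_X_add_C_eq_sum p a (N := k + 3) (by omega), sum_range_add,
      sum_eq_zero fun m hm => by simp [Nat.choose_eq_zero_of_lt (by simp at hm; omega : m < t)],
      zero_add]
  refine ⟨?_, ?_, ?_⟩ <;> rw [hsum _ (by omega)] <;>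
    simp [sum_range_succ, Nat.choose_eq_zero_of_lt]
  · ring
  · rw [Nat.choose_symm_add]
    ring

theorem coeff_add_one_X_sub_C_mul_sub_X_mul_comp (g : R[X]) (c a : R) (m : ℕ) :
    ((X - C c) * g - X * g.comp (X + C a)).coeff (m + 1) =
      g.coeff m - c * g.coeff (m + 1) - (g.comp (X + C a)).coeff m := by
  simp only [sub_mul, coeff_sub, coeff_X_mul, coeff_C_mul]

variable {g : R[X]} {k : ℕ}

theorem Monic.degree_X_sub_C_mul_sub_X_mul_comp_lt (hg : g.Monic) (hdeg : g.natDegree = k + 2) :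
    ((X - C ((k : R) + 2)) * g - X * g.comp (X + C (-1))).degree < ↑(k + 2) := by
  obtain ⟨hc2, hc1, -⟩ := coeff_comp_X_add_C_of_natDegree_le (-1) hdeg.le
  have hg_top : g.coeff (k + 2) = 1 := hdeg ▸ hg.coeff_natDegree
  have hcomp : (g.comp (X + C (-1))).natDegree ≤ k + 2 := natDegree_comp_le.trans <| by
    rw [natDegree_add_C, hdeg]
    simpa using Nat.mul_le_mul_left (k + 2) (natDegree_X_le (R := R))
  refine degree_lt_iff_coeff_zero _ _ |>.mpr fun m hm => ?_
  obtain ⟨m, rfl⟩ : ∃ m', m = m' + 1 := ⟨m - 1, by omega⟩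
  rw [coeff_add_one_X_sub_C_mul_sub_X_mul_comp]
  obtain rfl | rfl | hm := (show m = k + 1 ∨ m = k + 2 ∨ k + 2 < m by omega)
  · rw [hc1, hg_top]
    ring
  · rw [hc2, coeff_eq_zero_of_natDegree_lt (by omega : g.natDegree < k + 2 + 1)]
    ring
  · rw [coeff_eq_zero_of_natDegree_lt (by omega : g.natDegree < m),
      coeff_eq_zero_of_natDegree_lt (by omega : g.natDegree < m + 1),
      coeff_eq_zero_of_natDegree_lt (p := g.comp _) (hcomp.trans_lt (by omega))]
    ring

theorem Monic.coeff_X_sub_C_mul_sub_X_mul_comp (hg : g.Monic) (hdeg : g.natDegree = k + 2) :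
    ((X - C ((k : R) + 2)) * g - X * g.comp (X + C (-1))).coeff (k + 1) =
      -g.coeff (k + 1) - (k + 2).choose 2 := by
  obtain ⟨-, -, hc0⟩ := coeff_comp_X_add_C_of_natDegree_le (-1) hdeg.le
  have hg_top : g.coeff (k + 2) = 1 := hdeg ▸ hg.coeff_natDegree
  rw [coeff_add_one_X_sub_C_mul_sub_X_mul_comp, hc0, hg_top]
  ring

end Polynomial

/-- With `g = ∏ (X - x_i)`, the polynomial `Q = (X - #s) g - X g(X - 1)` has degree `< #s`, takes
the value `x_r ∏_{j ≠ r} (x_r - 1 - x_j)` at `x_r`, and its coefficient of `X ^ (#s - 1)` is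
`∑ x_i - (#s).choose 2`; compare with Lagrange interpolation at the `x_r`. -/
theorem sum_mul_prod_sub_one_sub_div_prod_sub {ι F : Type*} [DecidableEq ι] [Field F]
    (s : Finset ι) (x : ι → F) (hx : Set.InjOn x s) :
    ∑ r ∈ s, x r * (∏ j ∈ s.erase r, (x r - 1 - x j)) / ∏ j ∈ s.erase r, (x r - x j) =
      ∑ i ∈ s, x i - (#s).choose 2 := by
  rcases lt_or_ge #s 2 with hs | hs
  · obtain h | h : #s = 0 ∨ #s = 1 := by omega
    · simp [card_eq_zero.mp h]
    · obtain ⟨a, rfl⟩ := card_eq_one.mp h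
      simp
  obtain ⟨k, hk⟩ : ∃ k, #s = k + 2 := ⟨#s - 2, by omega⟩
  have hg : (Lagrange.nodal s x).natDegree = k + 2 := by rw [Lagrange.natDegree_nodal, hk]
  have hg_next : (Lagrange.nodal s x).coeff (k + 1) = -∑ i ∈ s, x i := by
    rw [← prod_X_sub_C_nextCoeff, ← Lagrange.nodal_eq, nextCoeff_of_natDegree_pos (by omega), hg]
    rfl
  set Q := (X - C ((k : F) + 2)) * Lagrange.nodal s x - X * (Lagrange.nodal s x).comp (X + C (-1))
  have hQ_eval : ∀ r ∈ s, Q.eval (x r) = x r * ∏ j ∈ s.erase r, (x r - 1 - x j) := by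
    intro r hr
    simp only [Q, eval_sub, eval_mul, eval_X, eval_C, eval_comp, eval_add,
      Lagrange.eval_nodal_at_node hr, Lagrange.eval_nodal, ← mul_prod_erase s _ hr,
      ← sub_eq_add_neg]
    ring
  have hlagrange := Lagrange.coeff_eq_sum hx
    (hk ▸ Lagrange.nodal_monic.degree_X_sub_C_mul_sub_X_mul_comp_lt hg)
  rw [hk, show k + 2 - 1 = k + 1 from rfl, Lagrange.nodal_monic.coeff_X_sub_C_mul_sub_X_mul_comp hg,
    hg_next] at hlagrange
  calc _ = ∑ r ∈ s, Q.eval (x r) / ∏ j ∈ s.erase r, (x r - x j) :=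
        sum_congr rfl fun r hr => by rw [hQ_eval r hr]
    _ = _ := by
        rw [← hlagrange, hk]
        ring

theorem Finset.prod_range_sub_eq_factorial (n : ℕ) : ∏ t ∈ range n, (n - t) = n ! := by
  rw [← prod_range_add_one_eq_factorial, ← prod_range_reflect]
  exact prod_congr rfl fun t ht => by rw [mem_range] at ht; omega

theorem Finset.range_erase_eq_range_union_Ioo {K r : ℕ} (hr : r < K) :
    (range K).erase r = range r ∪ Ioo r K := by
  ext i
  simp only [mem_erase, mem_range, mem_union, mem_Ioo]
  omega

theorem Finset.prod_range_prod_Ioo_sub_eq {R : Type*} [CommRing R] (z : ℕ → R) {K r : ℕ}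
    (hr : r < K) :
    ∏ i ∈ range K, ∏ j ∈ Ioo i K, (z i - z j) = (-1) ^ r * (∏ j ∈ (range K).erase r, (z r - z j)) *
      ∏ i ∈ (range K).erase r, ∏ j ∈ (Ioo i K).erase r, (z i - z j) := by
  have hsplit (i : ℕ) (hi : i ≠ r) : ∏ j ∈ Ioo i K, (z i - z j) =
      (if i < r then z i - z r else 1) * ∏ j ∈ (Ioo i K).erase r, (z i - z j) := by
    split_ifs with hir
    · exact (mul_prod_erase _ _ (mem_Ioo.mpr ⟨hir, hr⟩)).symm
    · rw [one_mul, erase_eq_of_notMem (by simp only [mem_Ioo]; omega)]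
  have hdisj : Disjoint (range r) (Ioo r K) := by
    simp only [disjoint_left, mem_range, mem_Ioo]; omega
  have hlow : ∏ i ∈ (range K).erase r, (if i < r then z i - z r else 1) =
      (-1) ^ r * ∏ j ∈ range r, (z r - z j) := by
    rw [range_erase_eq_range_union_Ioo hr, prod_union hdisj,
      prod_congr rfl fun i hi => if_pos (mem_range.mp hi),
      prod_congr rfl fun i hi => if_neg (by simp only [mem_Ioo] at hi; omega),
      prod_const_one, mul_one]
    simp_rw [← neg_sub (z r), prod_neg, card_range]
  rw [← mul_prod_erase (range K) _ (mem_range.mpr hr),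
    prod_congr rfl fun i hi => hsplit i (ne_of_mem_erase hi), prod_mul_distrib, hlow,
    range_erase_eq_range_union_Ioo hr, prod_union hdisj (f := fun j => z r - z j)]
  ring

namespace YoungDiagram

def hookProd (Y : YoungDiagram) : ℕ := ∏ c ∈ Y.cells, hookLength Y c.1 c.2

theorem charDegree_eq (Y : YoungDiagram) : charDegree Y = Y.card ! / Y.hookProd := rfl

/-- The `β`-numbers of `Y` padded with empty rows to `K ≥ Y.colLen 0` rows; for `K = Y.colLen 0`
they are the hook lengths of the first column. -/
def betaNumber (Y : YoungDiagram) (K i : ℕ) : ℕ := Y.rowLen i + (K - 1 - i)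

variable {Y : YoungDiagram} {K : ℕ}

theorem hookLength_pos {i j : ℕ} (h : (i, j) ∈ Y) : 0 < hookLength Y i j := by
  have := mem_iff_lt_rowLen.mp h
  have := mem_iff_lt_colLen.mp h
  unfold hookLength
  omega

theorem hookProd_pos (Y : YoungDiagram) : 0 < Y.hookProd :=
  prod_pos fun c hc => hookLength_pos ((mem_cells c).mp hc)

theorem colLen_le_of_colLen_zero_le (hK : Y.colLen 0 ≤ K) (j : ℕ) : Y.colLen j ≤ K :=
  (Y.colLen_anti 0 j j.zero_le).trans hK

theorem betaNumber_lt_betaNumber {i j : ℕ} (hij : i < j) (hj : j < K) :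
    Y.betaNumber K j < Y.betaNumber K i := by
  have := Y.rowLen_anti i j hij.le
  unfold betaNumber
  omega

theorem strictAntiOn_betaNumber (Y : YoungDiagram) (K : ℕ) :
    StrictAntiOn (Y.betaNumber K) (Set.Iio K) :=
  fun _ _ _ hj hij => betaNumber_lt_betaNumber hij hj

theorem hookLength_add_eq_betaNumber (hK : Y.colLen 0 ≤ K) {i j : ℕ} (h : (i, j) ∈ Y) :
    hookLength Y i j + (j + (K - Y.colLen j)) = Y.betaNumber K i := by
  have := mem_iff_lt_rowLen.mp h
  have := mem_iff_lt_colLen.mp h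
  have := colLen_le_of_colLen_zero_le hK j
  unfold hookLength betaNumber
  omega

theorem strictMono_add_sub_colLen (hK : Y.colLen 0 ≤ K) :
    StrictMono fun j => j + (K - Y.colLen j) := fun a b hab => by
  have := Y.colLen_anti a b hab.le
  have := colLen_le_of_colLen_zero_le hK a
  dsimp only
  omega

theorem disjoint_image_add_sub_colLen_image_betaNumber (hK : Y.colLen 0 ≤ K) (i : ℕ) :
    Disjoint ((range (Y.rowLen i)).image fun j => j + (K - Y.colLen j))
      ((Ioo i K).image (Y.betaNumber K)) := by
  simp only [disjoint_left, mem_image, mem_range, mem_Ioo, not_exists, not_and]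
  rintro _ ⟨j, -, rfl⟩ j' ⟨-, hj'⟩ hj
  have hcell : j < Y.rowLen j' ↔ j' < Y.colLen j := by
    rw [← mem_iff_lt_rowLen, ← mem_iff_lt_colLen]
  have := colLen_le_of_colLen_zero_le hK j
  unfold betaNumber at hj
  by_cases hj'j : j < Y.rowLen j'
  · have := hcell.mp hj'j
    omega
  · have := mt hcell.mpr hj'j
    omega

/-- As `j + (K - Y.colLen j) = β_i - h(i, j)`, this says that the hook lengths of row `i` and the
differences `β_i - β_j` (`i < j < K`) together are exactly `1, …, β_i`. -/
theorem image_add_sub_colLen_union_image_betaNumber (hK : Y.colLen 0 ≤ K) {i : ℕ} (hi : i < K) :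
    (range (Y.rowLen i)).image (fun j => j + (K - Y.colLen j)) ∪
      (Ioo i K).image (Y.betaNumber K) = range (Y.betaNumber K i) := by
  have hsub : (range (Y.rowLen i)).image (fun j => j + (K - Y.colLen j)) ∪
      (Ioo i K).image (Y.betaNumber K) ⊆ range (Y.betaNumber K i) := by
    simp only [union_subset_iff, image_subset_iff, mem_range, mem_Ioo]
    refine ⟨fun j hj => ?_, fun j hj => betaNumber_lt_betaNumber hj.1 hj.2⟩
    have := hookLength_add_eq_betaNumber hK (mem_iff_lt_rowLen.mpr hj)
    have := hookLength_pos (mem_iff_lt_rowLen.mpr hj)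
    omega
  refine eq_of_subset_of_card_le hsub ?_
  rw [card_union_of_disjoint (disjoint_image_add_sub_colLen_image_betaNumber hK i),
    card_image_of_injective _ (strictMono_add_sub_colLen hK).injective,
    card_image_of_injOn ((strictAntiOn_betaNumber Y K).injOn.mono fun j hj => (mem_Ioo.mp hj).2),
    card_range, card_range, Nat.card_Ioo, betaNumber]
  omega

theorem factorial_betaNumber (hK : Y.colLen 0 ≤ K) {i : ℕ} (hi : i < K) :
    (Y.betaNumber K i)! = (∏ j ∈ range (Y.rowLen i), hookLength Y i j) *
      ∏ j ∈ Ioo i K, (Y.betaNumber K i - Y.betaNumber K j) := by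
  rw [← prod_range_sub_eq_factorial, ← image_add_sub_colLen_union_image_betaNumber hK hi,
    prod_union (disjoint_image_add_sub_colLen_image_betaNumber hK i),
    prod_image (strictMono_add_sub_colLen hK).injective.injOn,
    prod_image ((strictAntiOn_betaNumber Y K).injOn.mono fun j hj => (mem_Ioo.mp hj).2)]
  congr 1
  refine prod_congr rfl fun j hj => ?_
  have := hookLength_add_eq_betaNumber hK (mem_iff_lt_rowLen.mpr (mem_range.mp hj))
  omega

theorem mem_cells_iff_of_colLen_le (hK : Y.colLen 0 ≤ K) (c : ℕ × ℕ) :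
    c ∈ Y.cells ↔ c.1 ∈ range K ∧ c.2 ∈ range (Y.rowLen c.1) := by
  rw [mem_cells, mem_range, mem_range, ← mem_iff_lt_rowLen]
  refine ⟨fun h => ⟨?_, h⟩, And.right⟩
  exact (mem_iff_lt_colLen.mp (Y.up_left_mem le_rfl c.2.zero_le h)).trans_le hK

theorem card_eq_sum_rowLen (hK : Y.colLen 0 ≤ K) : Y.card = ∑ i ∈ range K, Y.rowLen i := by
  rw [YoungDiagram.card, card_eq_sum_ones,
    sum_finset_product _ (range K) (fun i => range (Y.rowLen i))
      (mem_cells_iff_of_colLen_le hK) (f := fun _ => 1)]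
  simp

theorem sum_betaNumber (hK : Y.colLen 0 ≤ K) :
    ∑ i ∈ range K, Y.betaNumber K i = Y.card + K.choose 2 := by
  have hrev : ∑ i ∈ range K, (K - 1 - i) = ∑ i ∈ range K, i := by
    rw [← sum_range_reflect]
    exact sum_congr rfl fun i hi => by rw [mem_range] at hi; omega
  simp only [betaNumber]
  rw [sum_add_distrib, hrev, sum_range_id, Nat.choose_two_right,
    card_eq_sum_rowLen hK]

/-- The hook length formula in Frobenius' form `f^λ = n! ∏_{i < j} (β_i - β_j) / ∏ β_i!`. -/
theorem prod_factorial_betaNumber (hK : Y.colLen 0 ≤ K) :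
    ∏ i ∈ range K, ((Y.betaNumber K i)! : ℚ) = Y.hookProd *
      ∏ i ∈ range K, ∏ j ∈ Ioo i K, ((Y.betaNumber K i : ℚ) - Y.betaNumber K j) := by
  have hrows : Y.hookProd = ∏ i ∈ range K, ∏ j ∈ range (Y.rowLen i), hookLength Y i j :=
    prod_finset_product' _ (range K) (fun i => range (Y.rowLen i))
      (mem_cells_iff_of_colLen_le hK)
  have hnat := prod_congr rfl fun i hi => factorial_betaNumber hK (mem_range.mp hi)
  rw [prod_mul_distrib, ← hrows] at hnat
  rw [← Nat.cast_prod, hnat]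
  push_cast
  congr 1
  refine prod_congr rfl fun i _ => prod_congr rfl fun j hj => ?_
  rw [mem_Ioo] at hj
  rw [Nat.cast_sub (betaNumber_lt_betaNumber hj.1 hj.2).le]

theorem rowLen_eq_of_forall_mem_iff {i l : ℕ} (h : ∀ j, (i, j) ∈ Y ↔ j < l) : Y.rowLen i = l :=
  le_antisymm (not_lt.mp fun hl => (h l).mp (mem_iff_lt_rowLen.mpr hl) |>.false)
    (not_lt.mp fun hl => ((h _).mpr hl |> mem_iff_lt_rowLen.mp).false)

theorem colLen_le_colLen {Z : YoungDiagram} (h : Z.cells ⊆ Y.cells) (j : ℕ) :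
    Z.colLen j ≤ Y.colLen j :=
  not_lt.mp fun hlt => (mem_iff_lt_colLen.mp ((mem_cells _).mp
    (h ((mem_cells _).mpr (mem_iff_lt_colLen.mpr hlt))))).false

/-- The diagram obtained from `Y` by deleting the last cell of row `r` when this cell is a
removable corner, i.e. when `Y.rowLen (r + 1) < Y.rowLen r`; otherwise `Y` itself. -/
def eraseCorner (Y : YoungDiagram) (r : ℕ) : YoungDiagram :=
  if h : Y.rowLen (r + 1) < Y.rowLen r then
    { cells := Y.cells.erase (r, Y.rowLen r - 1)
      isLowerSet := by
        rintro ⟨a₁, a₂⟩ ⟨b₁, b₂⟩ ⟨hb₁ : b₁ ≤ a₁, hb₂ : b₂ ≤ a₂⟩ ha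
        simp only [coe_erase, Set.mem_sdiff, Set.mem_singleton_iff, mem_coe, mem_cells,
          Prod.mk.injEq] at ha ⊢
        refine ⟨Y.up_left_mem hb₁ hb₂ ha.1, ?_⟩
        rintro ⟨rfl, rfl⟩
        have ha₂ := mem_iff_lt_rowLen.mp ha.1
        obtain rfl : a₁ = b₁ := by
          by_contra hne
          have := Y.rowLen_anti (b₁ + 1) a₁ (by omega)
          omega
        exact ha.2 ⟨rfl, by omega⟩ }
  else Y

def cornerRows (Y : YoungDiagram) : Finset ℕ :=
  (range (Y.colLen 0)).filter fun r => Y.rowLen (r + 1) < Y.rowLen r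

variable {r : ℕ}

theorem mem_cornerRows : r ∈ Y.cornerRows ↔ r < Y.colLen 0 ∧ Y.rowLen (r + 1) < Y.rowLen r := by
  rw [cornerRows, mem_filter, mem_range]

theorem cornerRows_subset_range : Y.cornerRows ⊆ range (Y.colLen 0) := filter_subset _ _

theorem cells_eraseCorner (h : Y.rowLen (r + 1) < Y.rowLen r) :
    (Y.eraseCorner r).cells = Y.cells.erase (r, Y.rowLen r - 1) := by
  rw [eraseCorner, dif_pos h]

theorem cells_eraseCorner_subset (h : Y.rowLen (r + 1) < Y.rowLen r) :
    (Y.eraseCorner r).cells ⊆ Y.cells :=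
  cells_eraseCorner h ▸ erase_subset _ _

theorem card_eraseCorner (h : Y.rowLen (r + 1) < Y.rowLen r) :
    (Y.eraseCorner r).card + 1 = Y.card := by
  rw [YoungDiagram.card, YoungDiagram.card, cells_eraseCorner h, card_erase_add_one]
  rw [mem_cells, mem_iff_lt_rowLen]
  omega

theorem rowLen_eraseCorner (h : Y.rowLen (r + 1) < Y.rowLen r) (i : ℕ) :
    (Y.eraseCorner r).rowLen i = if i = r then Y.rowLen r - 1 else Y.rowLen i := by
  refine rowLen_eq_of_forall_mem_iff fun j => ?_
  rw [← mem_cells, cells_eraseCorner h, mem_erase, mem_cells, mem_iff_lt_rowLen, ne_eq,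
    Prod.mk.injEq]
  split_ifs with hi
  · subst hi
    omega
  · exact ⟨And.right, fun hj => ⟨fun h => hi h.1, hj⟩⟩

theorem betaNumber_eraseCorner (h : Y.rowLen (r + 1) < Y.rowLen r) :
    (Y.eraseCorner r).betaNumber K =
      Function.update (Y.betaNumber K) r (Y.betaNumber K r - 1) := by
  funext i
  simp only [betaNumber, rowLen_eraseCorner h, Function.update_apply]
  split_ifs with hi
  · subst hi
    omega
  · rfl

/-- Removing the corner of row `r` multiplies `∏ β_i!` by `1 / β_r` and changes the `β`-Vandermonde
product only in the factors involving `β_r`. -/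
theorem hookProd_mul_prod_sub_eq (hK : Y.colLen 0 ≤ K) (hrK : r < K)
    (h : Y.rowLen (r + 1) < Y.rowLen r) :
    (Y.hookProd : ℚ) * ∏ j ∈ (range K).erase r, ((Y.betaNumber K r : ℚ) - Y.betaNumber K j) =
      (Y.eraseCorner r).hookProd * Y.betaNumber K r *
        ∏ j ∈ (range K).erase r, ((Y.betaNumber K r : ℚ) - 1 - Y.betaNumber K j) := by
  have hβ'_ne {i : ℕ} (hi : i ≠ r) : (Y.eraseCorner r).betaNumber K i = Y.betaNumber K i := by
    rw [betaNumber_eraseCorner h, Function.update_of_ne hi]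
  have hβ'_r : (Y.eraseCorner r).betaNumber K r + 1 = Y.betaNumber K r := by
    rw [betaNumber_eraseCorner h, Function.update_self]
    simp only [betaNumber]
    omega
  have hY := prod_factorial_betaNumber hK
  have hZ := prod_factorial_betaNumber ((colLen_le_colLen (cells_eraseCorner_subset h) 0).trans hK)
  rw [prod_range_prod_Ioo_sub_eq _ hrK] at hY hZ
  set β := Y.betaNumber K
  set β' := (Y.eraseCorner r).betaNumber K
  have hfact : ∏ i ∈ range K, ((β i)! : ℚ) = β r * ∏ i ∈ range K, ((β' i)! : ℚ) := by
    have herase : ∏ i ∈ (range K).erase r, ((β' i)! : ℚ) = ∏ i ∈ (range K).erase r, ((β i)! : ℚ) :=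
      prod_congr rfl fun i hi => by rw [hβ'_ne (ne_of_mem_erase hi)]
    rw [← mul_prod_erase _ _ (mem_range.mpr hrK), ← mul_prod_erase _ _ (mem_range.mpr hrK),
      herase, ← hβ'_r, Nat.factorial_succ]
    push_cast
    ring
  have hC : ∏ i ∈ (range K).erase r, ∏ j ∈ (Ioo i K).erase r, ((β i : ℚ) - β j) ≠ 0 :=
    prod_ne_zero_iff.mpr fun i hi => prod_ne_zero_iff.mpr fun j hj => by
      have hij := mem_Ioo.mp (mem_of_mem_erase hj)
      exact sub_ne_zero.mpr (Nat.cast_injective.ne (betaNumber_lt_betaNumber hij.1 hij.2).ne')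
  have hC' : ∏ i ∈ (range K).erase r, ∏ j ∈ (Ioo i K).erase r, ((β' i : ℚ) - β' j) =
      ∏ i ∈ (range K).erase r, ∏ j ∈ (Ioo i K).erase r, ((β i : ℚ) - β j) :=
    prod_congr rfl fun i hi => prod_congr rfl fun j hj => by
      rw [hβ'_ne (ne_of_mem_erase hi), hβ'_ne (ne_of_mem_erase hj)]
  have hA' : ∏ j ∈ (range K).erase r, ((β' r : ℚ) - β' j) =
      ∏ j ∈ (range K).erase r, ((β r : ℚ) - 1 - β j) :=
    prod_congr rfl fun j hj => by rw [hβ'_ne (ne_of_mem_erase hj), ← hβ'_r]; push_cast; ring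
  rw [hC', hA'] at hZ
  apply mul_right_cancel₀ (mul_ne_zero (pow_ne_zero r (neg_ne_zero.mpr one_ne_zero)) hC)
  linear_combination hY.symm.trans (hfact.trans (congrArg _ hZ))

theorem sum_hookProd_div_hookProd_eraseCorner (Y : YoungDiagram) :
    ∑ r ∈ Y.cornerRows, (Y.hookProd : ℚ) / (Y.eraseCorner r).hookProd = Y.card := by
  set K := Y.colLen 0
  set x : ℕ → ℚ := fun i => Y.betaNumber K i
  have hx : Set.InjOn x (range K) := by
    rw [coe_range]
    exact Nat.cast_injective.comp_injOn (strictAntiOn_betaNumber Y K).injOn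
  set q : ℕ → ℚ := fun r =>
    x r * (∏ j ∈ (range K).erase r, (x r - 1 - x j)) / ∏ j ∈ (range K).erase r, (x r - x j)
  have hterm : ∀ r ∈ Y.cornerRows, (Y.hookProd : ℚ) / (Y.eraseCorner r).hookProd = q r := by
    intro r hr
    obtain ⟨hrK, h⟩ := mem_cornerRows.mp hr
    have hden : ∏ j ∈ (range K).erase r, (x r - x j) ≠ 0 :=
      prod_ne_zero_iff.mpr fun j hj => sub_ne_zero.mpr fun h =>
        ne_of_mem_erase hj (hx (mem_range.mpr hrK) (mem_of_mem_erase hj) h).symm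
    rw [div_eq_div_iff (Nat.cast_ne_zero.mpr (hookProd_pos _).ne') hden]
    linear_combination hookProd_mul_prod_sub_eq le_rfl hrK h
  -- A row `r < K` that ends in no corner has `β_{r+1} = β_r - 1`, so its term vanishes.
  have hvanish : ∀ r ∈ range K, r ∉ Y.cornerRows → q r = 0 := by
    intro r hr hcorner
    rw [mem_range] at hr
    have hlen : Y.rowLen (r + 1) = Y.rowLen r := by
      have := Y.rowLen_anti r (r + 1) r.le_succ
      rw [mem_cornerRows] at hcorner
      omega
    have hr1 : r + 1 < K := by
      have := mem_iff_lt_rowLen.mp (mem_iff_lt_colLen.mpr hr : (r, 0) ∈ Y)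
      exact mem_iff_lt_colLen.mp (mem_iff_lt_rowLen.mpr (hlen ▸ this))
    simp only [q]
    rw [prod_eq_zero (i := r + 1) (mem_erase.mpr ⟨by omega, mem_range.mpr hr1⟩), mul_zero,
      zero_div]
    simp only [x, betaNumber, hlen]
    push_cast [show K - 1 - r = K - 1 - (r + 1) + 1 by omega]
    ring
  rw [sum_congr rfl hterm, sum_subset cornerRows_subset_range hvanish,
    sum_mul_prod_sub_one_sub_div_prod_sub _ x hx, card_range]
  simp only [x]
  rw [← Nat.cast_sum, sum_betaNumber le_rfl]
  push_cast
  ring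

theorem factorial_div_hookProd_eq_sum (hY : 0 < Y.card) :
    (Y.card ! : ℚ) / Y.hookProd =
      ∑ r ∈ Y.cornerRows, ((Y.eraseCorner r).card ! : ℚ) / (Y.eraseCorner r).hookProd := by
  obtain ⟨n, hn⟩ : ∃ n, Y.card = n + 1 := ⟨Y.card - 1, by omega⟩
  have hcard : ∀ r ∈ Y.cornerRows, (Y.eraseCorner r).card = n := fun r hr => by
    have := card_eraseCorner (mem_cornerRows.mp hr).2
    omega
  rw [sum_congr rfl fun r hr => by rw [hcard r hr], hn]
  have hH : (Y.hookProd : ℚ) ≠ 0 := Nat.cast_ne_zero.mpr (hookProd_pos Y).ne'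
  calc ((n + 1)! : ℚ) / Y.hookProd
      = n ! / Y.hookProd * ∑ r ∈ Y.cornerRows, (Y.hookProd : ℚ) / (Y.eraseCorner r).hookProd := by
        rw [sum_hookProd_div_hookProd_eraseCorner, hn, Nat.factorial_succ]
        push_cast
        ring
    _ = _ := by
        rw [mul_sum]
        exact sum_congr rfl fun r _ => by field_simp

theorem cast_charDegree (Y : YoungDiagram) : (charDegree Y : ℚ) = Y.card ! / Y.hookProd := by
  induction hn : Y.card generalizing Y with
  | zero =>
    rw [YoungDiagram.card, card_eq_zero] at hn
    simp [charDegree, YoungDiagram.card, hookProd, hn]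
  | succ n ih =>
    set m := ∑ r ∈ Y.cornerRows, charDegree (Y.eraseCorner r)
    have hm : ((n + 1)! : ℚ) / Y.hookProd = m := by
      rw [← hn, factorial_div_hookProd_eq_sum (by omega), Nat.cast_sum]
      refine sum_congr rfl fun r hr => ?_
      have hr : (Y.eraseCorner r).card = n := by
        have := card_eraseCorner (mem_cornerRows.mp hr).2
        omega
      rw [ih _ hr, hr]
    have hH := hookProd_pos Y
    have hdvd : (n + 1)! = m * Y.hookProd := by
      rw [div_eq_iff (by positivity)] at hm
      exact_mod_cast hm
    rw [charDegree_eq, hn, hdvd, Nat.mul_div_cancel _ hH, ← hm, hdvd]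

theorem charDegree_eq_sum_charDegree_eraseCorner (hY : 0 < Y.card) :
    charDegree Y = ∑ r ∈ Y.cornerRows, charDegree (Y.eraseCorner r) := by
  apply Nat.cast_injective (R := ℚ)
  simp only [Nat.cast_sum, cast_charDegree]
  exact factorial_div_hookProd_eq_sum hY

end YoungDiagram

open YoungDiagram

theorem nonempty_YminusP {p : ℕ} {Y : YoungDiagram} (hY : 0 < Y.card) (hp : CoprimeDeg p Y) :
    (YminusP p Y).Nonempty := by
  by_contra hempty
  apply hp
  rw [charDegree_eq_sum_charDegree_eraseCorner hY]
  refine dvd_sum fun r hr => ?_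
  by_contra hr'
  have h := (mem_cornerRows.mp hr).2
  exact hempty ⟨Y.eraseCorner r, ⟨cells_eraseCorner_subset h, card_eraseCorner h⟩, hr'⟩

theorem exists_charDegree_eq_one (n : ℕ) : ∃ Y : YoungDiagram, Y.card = n ∧ charDegree Y = 1 := by
  set Y := ofRowLens [n] (List.sortedGE_iff_pairwise.mpr (List.pairwise_singleton _ _))
  have hcol : Y.colLen 0 ≤ 1 := by
    refine not_lt.mp fun h => ?_
    obtain ⟨h, -⟩ := mem_ofRowLens.mp (mem_iff_lt_colLen.mpr h)
    simp at h
  have hrow : Y.rowLen 0 = n := rowLen_ofRowLens (w := [n]) ⟨0, by simp⟩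
  have hcard : Y.card = n := by rw [card_eq_sum_rowLen hcol]; simp [hrow]
  have hH : n ! = Y.hookProd := by
    have := prod_factorial_betaNumber hcol
    rw [prod_range_one, prod_range_one, show Ioo 0 1 = ∅ by rfl] at this
    simpa [betaNumber, hrow] using this
  refine ⟨Y, hcard, ?_⟩
  rw [charDegree_eq, hcard, hH, Nat.div_self (hookProd_pos Y)]

theorem finite_Yminus (Y : YoungDiagram) : (Yminus Y).Finite :=
  (Y.cells.powerset.finite_toSet.preimage fun _ _ _ _ h => YoungDiagram.ext h).subset
    fun _ hZ => by simpa using hZ.1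

theorem ncard_Yminus_le (Y : YoungDiagram) : (Yminus Y).ncard ≤ 2 ^ Y.card := by
  have := Set.ncard_le_ncard_of_injOn YoungDiagram.cells (s := Yminus Y) (t := Y.cells.powerset)
    (fun _ hZ => by simpa using hZ.1) fun _ _ _ _ h => YoungDiagram.ext h
  rwa [Set.ncard_coe_finset, card_powerset] at this

theorem bddAbove_ncard_YminusP (p n : ℕ) :
    BddAbove {m | ∃ Y : YoungDiagram, Y.card = n ∧ CoprimeDeg p Y ∧ m = (YminusP p Y).ncard} := by
  refine ⟨2 ^ n, ?_⟩
  rintro _ ⟨Y, rfl, -, rfl⟩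
  exact (Set.ncard_le_ncard (fun _ hZ => hZ.1) (finite_Yminus Y)).trans (ncard_Yminus_le Y)

/-- For every `n ≥ 1` and prime `p`, there is a `p'`-partition of `n`, and every
`p'`-partition `λ` of `n` has at least one `p'`-partition in `λ⁻`;
i.e. `br n ≥ 1`. -/
theorem exists_pprime_constituent (n p : ℕ) (hn : 1 ≤ n) (hp : p.Prime) :
    (∃ Y : YoungDiagram, Y.card = n ∧ CoprimeDeg p Y ∧ (YminusP p Y).Nonempty) ∧
      (∀ Y : YoungDiagram, Y.card = n → CoprimeDeg p Y → (YminusP p Y).Nonempty) ∧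
      1 ≤ br p n := by
  have hbranch (Y : YoungDiagram) (hY : Y.card = n) (hcop : CoprimeDeg p Y) :
      (YminusP p Y).Nonempty :=
    nonempty_YminusP (hY ▸ hn) hcop
  obtain ⟨Y, hY, hdeg⟩ := exists_charDegree_eq_one n
  have hcop : CoprimeDeg p Y := by
    rw [CoprimeDeg, hdeg, Nat.dvd_one]
    exact hp.ne_one
  refine ⟨⟨Y, hY, hcop, hbranch Y hY hcop⟩, hbranch, ?_⟩
  calc 1 ≤ (YminusP p Y).ncard :=
        (Set.ncard_pos ((finite_Yminus Y).subset fun _ hZ => hZ.1)).mpr (hbranch Y hY hcop)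
    _ ≤ br p n := le_csSup (bddAbove_ncard_YminusP p n) ⟨Y, hY, hcop, rfl⟩
end

section
/- Fix x ∈ ℕ. Consider 2-abacus configurations U obtained from the 2-abacus T of the partition (1) (having first gap in position (0,0)) by performing exactly x down-moves (equivalently, with w(U) = x and U↑ = T). The maximal number of removable beads on the right runner U₁ over all such U equals f(x) + 1, where f(x) = max{y : y(y+1) ≤ x}. -/
/-- A 2-abacus is modelled as a finite set `B ⊆ ℕ` of bead positions: the bead at
position `n` lies in row `n / 2` on runner `n % 2` (rows increase downwards; all
rows above the displayed window are full). `rem2 B` is the number of removable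
beads on the right runner: beads at `(i,1)` with `(i,0)` empty. -/
def rem2 (B : Finset ℕ) : ℕ := (B.filter fun n => n % 2 = 1 ∧ n - 1 ∉ B).card

/-- The set of values `Rem(U₁)` over 2-abaci `U` with `w(U) = x` and `U↑ = T`,
where `T` is the 2-abacus of the partition `(1)` displayed with `r + 1` rows:
beads in all positions of rows `0, …, r - 1` and a bead at `(r, 1)`; first gap
at `(r, 0)`.  The condition `U↑ = T` says runner `0` carries `r` beads and
runner `1` carries `r + 1` beads, and `w(U) = x` says the total row-sum of `U`
exceeds that of `T` by exactly `x`. -/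
def remSetOne (x : ℕ) : Set ℕ :=
  {m | ∃ r : ℕ, ∃ B : Finset ℕ,
    (B.filter fun n => n % 2 = 0).card = r ∧
    (B.filter fun n => n % 2 = 1).card = r + 1 ∧
    (∑ b ∈ B, b / 2) = x + r * r ∧
    m = rem2 B}

/-!
Split an abacus into the row sets `A` and `C` of its two runners, so `#C = #A + 1 = r + 1`,
the removable beads of runner 1 are `C \ A`, and the row sum is `∑ A + ∑ C = ∑ (A ∪ C) + ∑ (A ∩ C)`.
If `#(C \ A) = y + 1` then `A ∪ C` and `A ∩ C` have `r + y + 1` and `r - y` elements, and since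
`k` distinct naturals sum to at least `k (k - 1) / 2` this forces `x + r² ≥ y (y + 1) + r²`.
Conversely `A = {0, …, y - 1}`, `C = {y, …, 2y - 1} ∪ {2y + e}` attains `y + 1` with
`x = y (y + 1) + e`.
-/

open Finset

theorem Finset.sum_range_card_le_sum_nat (s : Finset ℕ) : ∑ n ∈ range #s, n ≤ ∑ n ∈ s, n := by
  have h := sum_range_le_sum (s := s.map Nat.castEmbedding) (c := 0) (by simp)
  simp only [card_map, zero_add, sum_map, Nat.castEmbedding_apply] at h
  have h' : ((∑ n ∈ range #s, n : ℕ) : ℤ) ≤ ((∑ n ∈ s, n : ℕ) : ℤ) := by push_cast; exact h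
  exact_mod_cast h'

theorem Finset.card_mul_card_le_two_mul_sum_add_card (s : Finset ℕ) :
    #s * #s ≤ 2 * ∑ n ∈ s, n + #s := by
  have hgauss := sum_range_id_mul_two #s
  have hsq : #s * #s = #s * (#s - 1) + #s := by
    rw [Nat.mul_sub_one, Nat.sub_add_cancel (Nat.le_mul_self _)]
  have := s.sum_range_card_le_sum_nat
  omega

theorem mul_add_one_add_card_mul_card_le_sum_add_sum {A C : Finset ℕ} {y : ℕ}
    (hC : #C = #A + 1) (hy : #(C \ A) = y + 1) :
    y * (y + 1) + #A * #A ≤ ∑ n ∈ A, n + ∑ n ∈ C, n := by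
  have hunion : #(A ∪ C) = #A + (y + 1) := by
    rw [union_comm, ← card_sdiff_add_card, hy, add_comm]
  have hinter : #(A ∩ C) + y = #A := by
    have := card_inter_add_card_union A C
    omega
  have hsum : ∑ n ∈ A ∪ C, n + ∑ n ∈ A ∩ C, n = ∑ n ∈ A, n + ∑ n ∈ C, n := sum_union_inter
  have hU := (A ∪ C).card_mul_card_le_two_mul_sum_add_card
  have hI := (A ∩ C).card_mul_card_le_two_mul_sum_add_card
  rw [hunion, ← hinter] at hU
  rw [← hinter]
  nlinarith

def abacus (A C : Finset ℕ) : Finset ℕ := A.image (2 * ·) ∪ C.image (2 * · + 1)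

def runner (i : ℕ) (B : Finset ℕ) : Finset ℕ := (B.filter (· % 2 = i)).image (· / 2)

theorem abacus_runner (B : Finset ℕ) : abacus (runner 0 B) (runner 1 B) = B := by
  ext n
  simp only [abacus, runner, mem_union, mem_image, mem_filter]
  constructor
  · rintro (⟨_, ⟨m, ⟨hm, hm2⟩, rfl⟩, rfl⟩ | ⟨_, ⟨m, ⟨hm, hm2⟩, rfl⟩, rfl⟩) <;>
      convert hm using 1 <;> omega
  · intro hn
    rcases Nat.mod_two_eq_zero_or_one n with h | h
    · exact Or.inl ⟨n / 2, ⟨n, ⟨hn, h⟩, rfl⟩, by omega⟩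
    · exact Or.inr ⟨n / 2, ⟨n, ⟨hn, h⟩, rfl⟩, by omega⟩

theorem disjoint_image_two_mul_image_two_mul_add_one (A C : Finset ℕ) :
    Disjoint (A.image (2 * ·)) (C.image (2 * · + 1)) := by
  simp only [disjoint_left, mem_image]
  rintro _ ⟨a, -, rfl⟩ ⟨c, -, h⟩
  omega

theorem card_filter_even_abacus (A C : Finset ℕ) :
    #((abacus A C).filter (· % 2 = 0)) = #A := by
  have : (abacus A C).filter (· % 2 = 0) = A.image (2 * ·) := by
    ext n
    simp only [abacus, mem_filter, mem_union, mem_image]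
    constructor
    · rintro ⟨⟨a, ha, rfl⟩ | ⟨c, -, rfl⟩, h⟩
      · exact ⟨a, ha, rfl⟩
      · omega
    · rintro ⟨a, ha, rfl⟩
      exact ⟨Or.inl ⟨a, ha, rfl⟩, by omega⟩
  rw [this, card_image_of_injective _ (fun a b h => by simpa using h)]

theorem card_filter_odd_abacus (A C : Finset ℕ) :
    #((abacus A C).filter (· % 2 = 1)) = #C := by
  have : (abacus A C).filter (· % 2 = 1) = C.image (2 * · + 1) := by
    ext n
    simp only [abacus, mem_filter, mem_union, mem_image]
    constructor
    · rintro ⟨⟨a, -, rfl⟩ | ⟨c, hc, rfl⟩, h⟩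
      · omega
      · exact ⟨c, hc, rfl⟩
    · rintro ⟨c, hc, rfl⟩
      exact ⟨Or.inr ⟨c, hc, rfl⟩, by omega⟩
  rw [this, card_image_of_injective _ (fun a b h => by simpa using h)]

theorem sum_div_two_abacus (A C : Finset ℕ) :
    ∑ b ∈ abacus A C, b / 2 = ∑ n ∈ A, n + ∑ n ∈ C, n := by
  rw [abacus, sum_union (disjoint_image_two_mul_image_two_mul_add_one A C),
    sum_image (fun a _ b _ h => by simpa using h), sum_image (fun a _ b _ h => by simpa using h)]
  congr 1 <;> refine sum_congr rfl fun n _ => by omega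

theorem rem2_abacus (A C : Finset ℕ) : rem2 (abacus A C) = #(C \ A) := by
  have : (abacus A C).filter (fun n => n % 2 = 1 ∧ n - 1 ∉ abacus A C) =
      (C \ A).image (2 * · + 1) := by
    ext n
    simp only [abacus, mem_filter, mem_union, mem_image, mem_sdiff, not_or, not_exists, not_and]
    constructor
    · rintro ⟨⟨a, -, rfl⟩ | ⟨c, hc, rfl⟩, h, hA, -⟩
      · omega
      · exact ⟨c, ⟨hc, fun hcA => hA c hcA (by omega)⟩, rfl⟩
    · rintro ⟨c, ⟨hc, hcA⟩, rfl⟩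
      refine ⟨Or.inr ⟨c, hc, rfl⟩, by omega, fun a ha h => hcA ?_, fun c' _ h => by omega⟩
      rwa [show c = a by omega]
  rw [rem2, this, card_image_of_injective _ (fun a b h => by simpa using h)]

theorem f_mul_f_add_one_le (x : ℕ) : f x * (f x + 1) ≤ x :=
  Nat.findGreatest_spec (P := fun y => y * (y + 1) ≤ x) (Nat.zero_le x) (Nat.zero_le x)

theorem le_f_of_mul_add_one_le {x y : ℕ} (h : y * (y + 1) ≤ x) : y ≤ f x :=
  Nat.le_findGreatest (le_trans (Nat.le_mul_of_pos_right y y.succ_pos) h) h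

theorem add_one_mem_remSetOne (y e : ℕ) : y + 1 ∈ remSetOne (y * (y + 1) + e) := by
  set C := insert (2 * y + e) (Ico y (2 * y))
  have hfresh : 2 * y + e ∉ Ico y (2 * y) := by simp
  have hCA : Disjoint C (range y) := by
    simp only [C, disjoint_left, mem_insert, mem_Ico, mem_range]
    omega
  have hsum : ∑ n ∈ range y, n + ∑ n ∈ C, n = y * (y + 1) + e + y * y := by
    have hgauss := sum_range_id_mul_two (2 * y)
    rw [sum_insert hfresh, add_left_comm, sum_range_add_sum_Ico _ (by omega)]
    rcases y with _ | y
    · simp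
    · simp only [show 2 * (y + 1) - 1 = 2 * y + 1 by omega] at hgauss
      nlinarith
  refine ⟨y, abacus (range y) C, by rw [card_filter_even_abacus, card_range], ?_,
    by rw [sum_div_two_abacus, hsum], ?_⟩
  · rw [card_filter_odd_abacus, card_insert_of_notMem hfresh, Nat.card_Ico]
    omega
  · rw [rem2_abacus, sdiff_eq_self_of_disjoint hCA, card_insert_of_notMem hfresh, Nat.card_Ico]
    omega

theorem le_f_add_one_of_mem_remSetOne {x m : ℕ} (hm : m ∈ remSetOne x) : m ≤ f x + 1 := by
  obtain ⟨r, B, h0, h1, hsum, rfl⟩ := hm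
  rw [← abacus_runner B] at h0 h1 hsum ⊢
  rw [card_filter_even_abacus] at h0
  rw [card_filter_odd_abacus, ← h0] at h1
  rw [sum_div_two_abacus, ← h0] at hsum
  rw [rem2_abacus]
  rcases h : #(runner 1 B \ runner 0 B) with _ | y
  · omega
  · have hy := mul_add_one_add_card_mul_card_le_sum_add_sum h1 h
    exact Nat.succ_le_succ (le_f_of_mul_add_one_le (by omega))

/-- The maximal number of removable beads on the right runner, over all 2-abaci
obtained from the 2-abacus of the partition `(1)` by `x` down-moves, is
`f x + 1`. -/
theorem max_rem_one (x : ℕ) : IsGreatest (remSetOne x) (f x + 1) := by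
  refine ⟨?_, fun m hm => le_f_add_one_of_mem_remSetOne hm⟩
  obtain ⟨e, he⟩ := Nat.exists_eq_add_of_le (f_mul_f_add_one_le x)
  have := add_one_mem_remSetOne (f x) e
  rwa [← he] at this
end

section
/- Fix x ∈ ℕ. Consider 2-abacus configurations U with U↑ equal to the 2-abacus of the empty partition (first gap at (0,0)) and w(U) = x. The maximal number of removable beads on the right runner U₁ over all such U equals ⌊√x⌋. -/
/-- The set of values `Rem(U₁)` over 2-abaci `U` with `w(U) = x` and `U↑` equal to
the 2-abacus of the empty partition displayed with `r` full rows (first gap at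
`(r, 0)`): runner `0` and runner `1` each carry `r` beads, and the total row-sum
of `U` exceeds that of the pushed-up configuration by exactly `x`. -/
def remSetEmpty (x : ℕ) : Set ℕ :=
  {m | ∃ r : ℕ, ∃ B : Finset ℕ,
    (B.filter fun n => n % 2 = 0).card = r ∧
    (B.filter fun n => n % 2 = 1).card = r ∧
    (∑ b ∈ B, b / 2) = x + r * (r - 1) ∧
    m = rem2 B}

/-!
Record a 2-abacus by the set `A` of rows with a bead on runner 0 and the set `C` of rows with a
bead on runner 1; the removable beads on runner 1 are the rows of `C \ A`. With `|A| = |C| = r`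
and `m = |C \ A|`, the rows `A ∪ C` and `A ∩ C` number `r + m` and `r - m` and carry the same
total as `A` and `C`. A set of `n` rows has row sum at least `n(n-1)/2`, and these two lower
bounds add up to `r(r-1) + m²`, so `m² ≤ x`. For `m = ⌊√x⌋ = k + 1` the bound is attained by
runner 0 in rows `0, …, k` and runner 1 in rows `k + 1, …, 2k`, its last bead pushed
`x - m²` rows further down.
-/

open Finset

theorem Finset.sum_range_card_le_sum (S : Finset ℕ) : ∑ i ∈ range #S, i ≤ ∑ i ∈ S, i := by
  induction S using Finset.induction_on_max with
  | empty => simp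
  | insert a S hlt ih =>
    have hcard : #S ≤ a := by
      simpa using card_le_card (fun b hb => mem_range.mpr (hlt b hb) : S ⊆ range a)
    rw [card_insert_of_notMem (fun ha => (hlt a ha).false), sum_range_succ,
      sum_insert (fun ha => (hlt a ha).false)]
    omega

theorem Finset.sq_card_sdiff_add_le_sum {A C : Finset ℕ} (hAC : #A = #C) :
    #(C \ A) ^ 2 + #C * (#C - 1) ≤ ∑ i ∈ A, i + ∑ i ∈ C, i := by
  have hunion := card_union_add_card_inter A C
  have hsdiff := card_sdiff_add_card_inter C A
  rw [inter_comm] at hsdiff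
  have hsum : ∑ i ∈ A ∪ C, i + ∑ i ∈ A ∩ C, i = ∑ i ∈ A, i + ∑ i ∈ C, i := sum_union_inter
  have hunion_sum := (A ∪ C).sum_range_card_le_sum
  have hinter_sum := (A ∩ C).sum_range_card_le_sum
  have gauss_union := sum_range_id_mul_two #(A ∪ C)
  have gauss_inter := sum_range_id_mul_two #(A ∩ C)
  have hsq : ∀ v m : ℕ,
      (v + 2 * m) * (v + 2 * m - 1) + v * (v - 1) = 2 * ((v + m) * (v + m - 1)) + 2 * m ^ 2 := by
    intro v m
    simp only [Nat.mul_sub_one]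
    zify [Nat.le_mul_self (v + 2 * m), Nat.le_mul_self v, Nat.le_mul_self (v + m)]
    ring
  have hcards := hsq #(A ∩ C) #(C \ A)
  rw [← show #(A ∪ C) = #(A ∩ C) + 2 * #(C \ A) by omega,
    ← show #C = #(A ∩ C) + #(C \ A) by omega] at hcards
  omega

def abacusOfRows (A C : Finset ℕ) : Finset ℕ := A.image (2 * ·) ∪ C.image (2 * · + 1)

lemma mem_abacusOfRows {A C : Finset ℕ} {n : ℕ} :
    n ∈ abacusOfRows A C ↔ (n % 2 = 0 ∧ n / 2 ∈ A) ∨ (n % 2 = 1 ∧ n / 2 ∈ C) := by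
  simp only [abacusOfRows, mem_union, mem_image]
  constructor
  · rintro (⟨a, ha, rfl⟩ | ⟨c, hc, rfl⟩)
    · exact .inl ⟨by omega, by simpa using ha⟩
    · exact .inr ⟨by omega, by simpa [Nat.mul_add_div] using hc⟩
  · rintro (⟨hn, h⟩ | ⟨hn, h⟩)
    · exact .inl ⟨n / 2, h, by omega⟩
    · exact .inr ⟨n / 2, h, by omega⟩

lemma exists_eq_abacusOfRows (B : Finset ℕ) : ∃ A C, B = abacusOfRows A C := by
  refine ⟨(B.filter (· % 2 = 0)).image (· / 2), (B.filter (· % 2 = 1)).image (· / 2), ?_⟩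
  ext n
  simp only [mem_abacusOfRows, mem_image, mem_filter]
  constructor
  · intro hn
    rcases Nat.mod_two_eq_zero_or_one n with h | h
    · exact .inl ⟨h, n, ⟨hn, h⟩, rfl⟩
    · exact .inr ⟨h, n, ⟨hn, h⟩, rfl⟩
  · rintro (⟨hn, b, ⟨hb, hb2⟩, hbn⟩ | ⟨hn, b, ⟨hb, hb2⟩, hbn⟩)
    all_goals rwa [show n = b by omega]

lemma card_filter_even_abacusOfRows (A C : Finset ℕ) :
    #((abacusOfRows A C).filter (· % 2 = 0)) = #A := by
  rw [abacusOfRows, filter_union, filter_true_of_mem (by simp), filter_false_of_mem (by simp),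
    union_empty, card_image_of_injective _ (fun a b h => by simpa using h)]

lemma card_filter_odd_abacusOfRows (A C : Finset ℕ) :
    #((abacusOfRows A C).filter (· % 2 = 1)) = #C := by
  rw [abacusOfRows, filter_union, filter_false_of_mem (by simp), filter_true_of_mem (by simp),
    empty_union, card_image_of_injective _ (fun a b h => by simpa using h)]

lemma sum_div_two_abacusOfRows (A C : Finset ℕ) :
    ∑ b ∈ abacusOfRows A C, b / 2 = ∑ i ∈ A, i + ∑ i ∈ C, i := by
  rw [abacusOfRows, sum_union (disjoint_left.mpr (by simp; omega)),
    sum_image (fun a _ b _ h => by simpa using h), sum_image (fun a _ b _ h => by simpa using h)]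
  simp [Nat.mul_add_div]

lemma rem2_abacusOfRows (A C : Finset ℕ) : rem2 (abacusOfRows A C) = #(C \ A) := by
  have hinj : (2 * · + 1).Injective := fun a b h => by simpa using h
  rw [rem2, ← card_image_of_injective (C \ A) hinj]
  congr 1
  ext n
  simp only [mem_filter, mem_abacusOfRows, mem_image, mem_sdiff]
  constructor
  · rintro ⟨hB, hn, hgap⟩
    have hpred : (n - 1) / 2 = n / 2 := by omega
    refine ⟨n / 2, ⟨(hB.resolve_left (by omega)).2, fun h => hgap (.inl ⟨by omega, ?_⟩)⟩, by omega⟩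
    rwa [hpred]
  · rintro ⟨c, ⟨hc, hcA⟩, rfl⟩
    refine ⟨.inr ⟨by omega, by simpa [Nat.mul_add_div] using hc⟩, by omega, ?_⟩
    rintro (⟨_, h⟩ | ⟨h, _⟩)
    · exact hcA (by simpa using h)
    · omega

lemma mem_remSetEmpty_iff {x m : ℕ} : m ∈ remSetEmpty x ↔
    ∃ A C : Finset ℕ, #A = #C ∧ ∑ i ∈ A, i + ∑ i ∈ C, i = x + #C * (#C - 1) ∧ m = #(C \ A) := by
  constructor
  · rintro ⟨r, B, hA, hC, hsum, rfl⟩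
    obtain ⟨A, C, rfl⟩ := exists_eq_abacusOfRows B
    rw [card_filter_even_abacusOfRows] at hA
    rw [card_filter_odd_abacusOfRows] at hC
    subst hC
    exact ⟨A, C, hA, (sum_div_two_abacusOfRows A C).symm.trans hsum, rem2_abacusOfRows A C⟩
  · rintro ⟨A, C, hAC, hsum, rfl⟩
    exact ⟨#C, abacusOfRows A C, by rw [card_filter_even_abacusOfRows, hAC],
      card_filter_odd_abacusOfRows A C, by rw [sum_div_two_abacusOfRows, hsum],
      (rem2_abacusOfRows A C).symm⟩

lemma sq_le_of_mem_remSetEmpty {x m : ℕ} (h : m ∈ remSetEmpty x) : m ^ 2 ≤ x := by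
  obtain ⟨A, C, hAC, hsum, rfl⟩ := mem_remSetEmpty_iff.mp h
  have := sq_card_sdiff_add_le_sum hAC
  omega

lemma zero_mem_remSetEmpty_zero : 0 ∈ remSetEmpty 0 :=
  mem_remSetEmpty_iff.mpr ⟨∅, ∅, by simp⟩

lemma succ_mem_remSetEmpty (k t : ℕ) : k + 1 ∈ remSetEmpty ((k + 1) ^ 2 + t) := by
  set C := insert (2 * k + 1 + t) ((range k).map (addLeftEmbedding (k + 1)))
  have htop : 2 * k + 1 + t ∉ (range k).map (addLeftEmbedding (k + 1)) := by
    simp only [mem_map, mem_range, addLeftEmbedding_apply]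
    rintro ⟨a, ha, h⟩
    omega
  have hcard : #C = k + 1 := by rw [card_insert_of_notMem htop, card_map, card_range]
  have hdisj : Disjoint C (range (k + 1)) := by
    simp only [C, disjoint_left, mem_insert, mem_map, mem_range, addLeftEmbedding_apply]
    rintro c (rfl | ⟨a, ha, rfl⟩) <;> omega
  have hsum : ∑ i ∈ C, i = 2 * k + 1 + t + (k * (k + 1) + ∑ i ∈ range k, i) := by
    simp only [C, sum_insert htop, sum_map, addLeftEmbedding_apply]
    rw [sum_add_distrib, sum_const, card_range, smul_eq_mul]
  refine mem_remSetEmpty_iff.mpr ⟨range (k + 1), C, by rw [card_range, hcard], ?_, ?_⟩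
  · have gauss := sum_range_id_mul_two (k + 1)
    rw [sum_range_succ, Nat.add_sub_cancel] at gauss
    rw [sum_range_succ, hsum, hcard, Nat.add_sub_cancel]
    linarith
  · rw [sdiff_eq_self_of_disjoint hdisj, hcard]

/-- The maximal number of removable beads on the right runner, over all 2-abaci of
weight `x` whose pushed-up configuration is the abacus of the empty partition,
is `⌊√x⌋`. -/
theorem max_rem_empty (x : ℕ) : IsGreatest (remSetEmpty x) (Nat.sqrt x) := by
  refine ⟨?_, fun m hm => Nat.le_sqrt'.mpr (sq_le_of_mem_remSetEmpty hm)⟩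
  obtain ⟨t, hx⟩ := Nat.exists_eq_add_of_le (Nat.sqrt_le' x)
  rcases hs : Nat.sqrt x with _ | k
  · rw [Nat.sqrt_eq_zero.mp hs]
    exact zero_mem_remSetEmpty_zero
  · rw [hx, hs]
    exact succ_mem_remSetEmpty k t
end

section
/- Let p be a prime, k ≥ 1, and a ∈ {1,…,p-1}. For every p'-partition λ of a·p^k we have |λ⁻_{p'}| ≤ 2a; that is, br(a·p^k) ≤ 2a. -/
open Finset

namespace BrApk


/-- A finset of naturals of cardinality `r` has sum at least `0+1+...+(r-1)`,
with equality iff it is `range r`. -/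
theorem sum_ge_range (T : Finset ℕ) :
    ∑ i ∈ range T.card, i ≤ ∑ t ∈ T, t ∧
      (∑ t ∈ T, t = ∑ i ∈ range T.card, i → T = range T.card) := by
  induction T using Finset.induction_on_max with
  | empty => simp
  | insert a s ha ih =>
    have has : a ∉ s := fun h => lt_irrefl a (ha a h)
    have hcard : (insert a s).card = s.card + 1 := Finset.card_insert_of_notMem has
    have hs_le : s.card ≤ a := by
      have : s ⊆ range a := fun x hx => Finset.mem_range.mpr (ha x hx)
      simpa using Finset.card_le_card this
    have hsum : ∑ t ∈ insert a s, t = a + ∑ t ∈ s, t := Finset.sum_insert has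
    constructor
    · rw [hcard, Finset.sum_range_succ, hsum]
      omega
    · intro h
      rw [hcard, Finset.sum_range_succ, hsum] at h
      have h1 : a = s.card ∧ ∑ t ∈ s, t = ∑ i ∈ range s.card, i := by
        constructor <;> omega
      have h2 := ih.2 h1.2
      rw [hcard, Finset.range_add_one, ← h2, h1.1]


/-- `b / e` counts the naturals `g < b` congruent to `b` mod `e`. -/
theorem div_eq_card_congruent (b e : ℕ) (he : 0 < e) :
    b / e = ((range b).filter (fun g => g % e = b % e)).card := by
  have himg : (range b).filter (fun g => g % e = b % e)
      = (range (b / e)).image (fun t => b % e + e * t) := by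
    ext g
    simp only [Finset.mem_filter, Finset.mem_range, Finset.mem_image]
    constructor
    · rintro ⟨hg, hmod⟩
      refine ⟨g / e, ?_, ?_⟩
      · have h1 := Nat.div_add_mod g e
        have h2 := Nat.div_add_mod b e
        by_contra hle
        push_neg at hle
        have : b ≤ g := by nlinarith [Nat.le_of_lt_succ (Nat.lt_succ_of_le hle)]
        omega
      · have := Nat.div_add_mod g e
        omega
    · rintro ⟨t, ht, rfl⟩
      have h2 := Nat.div_add_mod b e
      have hmb : b % e < e := Nat.mod_lt _ he
      constructor
      · have h3 : e * t < e * (b / e) := Nat.mul_lt_mul_of_le_of_lt (le_refl e) ht he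
        omega
      · simp [Nat.add_mul_mod_self_left]
  rw [himg, Finset.card_image_of_injective _
    (fun x y hxy => Nat.eq_of_mul_eq_mul_left he (by omega)),
    Finset.card_range]

/-- The `p`-adic valuation of `m ≥ 1` counts the `j ∈ [1, b)` with `p ^ j ∣ m`. -/
theorem padicValNat_eq_card_dvd {p m b : ℕ} (hp : p.Prime) (hm : 0 < m)
    (hb : m < p ^ b) :
    padicValNat p m = ((Finset.Ico 1 b).filter (fun j => p ^ j ∣ m)).card := by
  haveI : Fact p.Prime := ⟨hp⟩
  have hv : padicValNat p m < b := by
    by_contra hle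
    push_neg at hle
    have h1 : p ^ b ∣ m := dvd_trans (pow_dvd_pow p hle) pow_padicValNat_dvd
    exact absurd (Nat.le_of_dvd hm h1) (not_le.mpr hb)
  have : (Finset.Ico 1 b).filter (fun j => p ^ j ∣ m)
      = Finset.Ico 1 (padicValNat p m + 1) := by
    ext j
    simp only [Finset.mem_filter, Finset.mem_Ico]
    rw [padicValNat_dvd_iff_le hm.ne']
    omega
  rw [this, Nat.card_Ico]
  omega


section Beta

variable {r : ℕ} (β : Fin r → ℕ)

/-- The beta-set (first-column hook lengths) as a finset. -/
def Bset : Finset ℕ := Finset.univ.image β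

/-- The set of "gaps" below bead `i` on its runner mod `e`. -/
def gapsSet (e : ℕ) (i : Fin r) : Finset ℕ :=
  (range (β i)).filter (fun g => g % e = β i % e ∧ g ∉ Bset β)

def gaps (e : ℕ) (i : Fin r) : ℕ := (gapsSet β e i).card

def belows (e : ℕ) (i : Fin r) : ℕ :=
  (Finset.univ.filter (fun l => β l < β i ∧ β l % e = β i % e)).card

/-- total displacement -/
def Wgt (e : ℕ) : ℕ := ∑ i, gaps β e i

def Pcnt (e : ℕ) : ℕ := ∑ i, belows β e i

/-- the pushed-down position of bead `i` -/
def phi (e : ℕ) (i : Fin r) : ℕ := β i - e * gaps β e i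

theorem div_eq_gaps_add_belows (hinj : Function.Injective β) (e : ℕ) (he : 0 < e) (i : Fin r) :
    β i / e = gaps β e i + belows β e i := by
  rw [div_eq_card_congruent (β i) e he]
  have hsplit := Finset.card_filter_add_card_filter_not
    (s := (range (β i)).filter (fun g => g % e = β i % e))
    (p := fun g => g ∈ Bset β)
  have h1 : ((range (β i)).filter (fun g => g % e = β i % e)).filter
      (fun g => g ∈ Bset β) = (Finset.univ.filter
        (fun l => β l < β i ∧ β l % e = β i % e)).image β := by
    ext x
    simp only [Finset.mem_filter, Finset.mem_range, Finset.mem_image, Bset,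
      Finset.mem_image, Finset.mem_univ, true_and]
    constructor
    · rintro ⟨⟨hx, hmod⟩, l, rfl⟩
      exact ⟨l, ⟨hx, hmod⟩, rfl⟩
    · rintro ⟨l, ⟨hx, hmod⟩, rfl⟩
      exact ⟨⟨hx, hmod⟩, l, rfl⟩
  have h2 : ((range (β i)).filter (fun g => g % e = β i % e)).filter
      (fun g => ¬ g ∈ Bset β) = gapsSet β e i := by
    rw [gapsSet, Finset.filter_filter]
  rw [h1, h2, Finset.card_image_of_injective _ hinj] at hsplit
  rw [gaps, belows]
  omega

theorem emul_gaps_le (hinj : Function.Injective β) (e : ℕ) (he : 0 < e) (i : Fin r) :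
    e * gaps β e i ≤ β i := by
  have h := div_eq_gaps_add_belows β hinj e he i
  have : gaps β e i ≤ β i / e := by omega
  calc e * gaps β e i ≤ e * (β i / e) := Nat.mul_le_mul_left e this
    _ = (β i / e) * e := Nat.mul_comm _ _
    _ ≤ β i := Nat.div_mul_le_self _ _

theorem phi_mod (hinj : Function.Injective β) (e : ℕ) (he : 0 < e) (i : Fin r) :
    phi β e i % e = β i % e := by
  have hle := emul_gaps_le β hinj e he i
  have : phi β e i + e * gaps β e i = β i := by rw [phi]; omega
  rw [← this, Nat.add_mul_mod_self_left]

theorem phi_add (hinj : Function.Injective β) (e : ℕ) (he : 0 < e) (i : Fin r) :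
    phi β e i + e * gaps β e i = β i := by
  have hle := emul_gaps_le β hinj e he i
  rw [phi]; omega


private theorem arith_aux (e gl D cardC ql qi cc bi bl : ℕ)
    (h1 : bi = e * qi + cc) (h2 : bl = e * ql + cc) (h3 : D + 1 ≤ cardC)
    (h4 : ql + cardC = qi) (h5 : e * (gl + D) ≤ bi) (h6 : e * gl ≤ bl)
    (he : 0 < e) : bl - e * gl < bi - e * (gl + D) := by
  have h7 : e * ql + e * cardC = e * qi := by rw [← mul_add, h4]
  have h8 : e * D + e ≤ e * cardC := by
    have := Nat.mul_le_mul_left e h3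
    rw [mul_add, mul_one] at this
    exact this
  have h9 : e * (gl + D) = e * gl + e * D := by ring
  zify [h5, h6]
  zify at h9 h8 h7 h1 h2
  linarith

theorem phi_lt_phi (hinj : Function.Injective β) (e : ℕ) (he : 0 < e)
    {i l : Fin r} (hres : β l % e = β i % e) (hlt : β l < β i) :
    phi β e l < phi β e i := by
  classical
  -- decompose the gap set of `i`
  have hrange : range (β i) = range (β l) ∪ Finset.Ico (β l) (β i) := by
    rw [Finset.range_eq_Ico, Finset.range_eq_Ico]
    exact (Finset.Ico_union_Ico_eq_Ico (Nat.zero_le (β l)) hlt.le).symm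
  have hdisj : Disjoint (range (β l)) (Finset.Ico (β l) (β i)) := by
    rw [Finset.disjoint_left]
    intro x hx hx'
    simp only [Finset.mem_range, Finset.mem_Ico] at hx hx'
    omega
  set Cset := (Finset.Ico (β l) (β i)).filter (fun g => g % e = β i % e) with hCset
  set Dset := (Finset.Ico (β l) (β i)).filter
      (fun g => g % e = β i % e ∧ g ∉ Bset β) with hDset
  have hgsplit : gapsSet β e i = gapsSet β e l ∪ Dset := by
    rw [gapsSet, gapsSet, hrange, Finset.filter_union, hres]
  have hgdisj : Disjoint (gapsSet β e l) Dset := by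
    apply Finset.disjoint_filter_filter hdisj
  have hgaps : gaps β e i = gaps β e l + Dset.card := by
    rw [gaps, hgsplit, Finset.card_union_of_disjoint hgdisj, gaps]
  -- counting congruent elements
  have hcount : β l / e + Cset.card = β i / e := by
    have h1 := div_eq_card_congruent (β i) e he
    have h2 := div_eq_card_congruent (β l) e he
    have h3 : (range (β i)).filter (fun g => g % e = β i % e)
        = (range (β l)).filter (fun g => g % e = β l % e) ∪ Cset := by
      rw [hrange, Finset.filter_union, hres]
    rw [h1, h2, h3, Finset.card_union_of_disjoint
      (Finset.disjoint_filter_filter hdisj)]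
  -- `β l` is a bead, so it is not a gap, yet it is congruent and in range
  have hbl_mem : β l ∈ Cset := by
    simp only [hCset, Finset.mem_filter, Finset.mem_Ico]
    exact ⟨⟨le_refl _, hlt⟩, hres⟩
  have hbl_bead : β l ∈ Bset β := by
    simp only [Bset, Finset.mem_image]
    exact ⟨l, Finset.mem_univ _, rfl⟩
  have hDsub : Dset ⊆ Cset.erase (β l) := by
    intro x hx
    simp only [hDset, Finset.mem_filter, Finset.mem_Ico] at hx
    rw [Finset.mem_erase]
    constructor
    · rintro rfl
      exact hx.2.2 hbl_bead
    · simp only [hCset, Finset.mem_filter, Finset.mem_Ico]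
      exact ⟨hx.1, hx.2.1⟩
  have hD : Dset.card + 1 ≤ Cset.card := by
    have h1 := Finset.card_le_card hDsub
    have h2 := Finset.card_erase_of_mem hbl_mem
    have h3 : 0 < Cset.card := Finset.card_pos.mpr ⟨β l, hbl_mem⟩
    omega
  have h5 := emul_gaps_le β hinj e he i
  have h6 := emul_gaps_le β hinj e he l
  rw [hgaps] at h5
  have := arith_aux e (gaps β e l) Dset.card Cset.card (β l / e) (β i / e)
    (β i % e) (β i) (β l) (Nat.div_add_mod (β i) e).symm
    (by rw [← hres]; exact (Nat.div_add_mod (β l) e).symm) hD hcount h5 h6 he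
  rw [phi, phi, hgaps]
  exact this

theorem phi_injective (hinj : Function.Injective β) (e : ℕ) (he : 0 < e) :
    Function.Injective (phi β e) := by
  intro i l h
  by_contra hne
  have hres : β i % e = β l % e := by
    rw [← phi_mod β hinj e he i, ← phi_mod β hinj e he l, h]
  have hbne : β i ≠ β l := fun hb => hne (hinj hb)
  rcases lt_or_gt_of_ne hbne with hlt | hlt
  · exact absurd h (Nat.ne_of_lt (phi_lt_phi β hinj e he hres hlt))
  · exact absurd h (Nat.ne_of_gt (phi_lt_phi β hinj e he hres.symm hlt))


theorem sum_phi_add (hinj : Function.Injective β) (e : ℕ) (he : 0 < e) :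
    ∑ i, phi β e i + e * Wgt β e = ∑ i, β i := by
  rw [Wgt, Finset.mul_sum, ← Finset.sum_add_distrib]
  exact Finset.sum_congr rfl (fun i _ => phi_add β hinj e he i)

theorem wgt_le_and_eq {n : ℕ} (hinj : Function.Injective β)
    (hn : ∑ i, β i = n + ∑ i : Fin r, (i : ℕ)) (e : ℕ) (he : 0 < e) :
    e * Wgt β e ≤ n ∧
      (e * Wgt β e = n → Finset.univ.image (phi β e) = range r) := by
  set T := Finset.univ.image (phi β e) with hT
  have hcard : T.card = r := by
    rw [hT, Finset.card_image_of_injective _ (phi_injective β hinj e he),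
      Finset.card_univ, Fintype.card_fin]
  have hsum : ∑ t ∈ T, t = ∑ i, phi β e i := by
    rw [hT, Finset.sum_image (fun x _ y _ h => phi_injective β hinj e he h)]
  have hkey := sum_ge_range T
  rw [hcard, hsum] at hkey
  have hfin : ∑ i : Fin r, (i : ℕ) = ∑ i ∈ range r, i :=
    Fin.sum_univ_eq_sum_range (fun i => i) r
  have hphi := sum_phi_add β hinj e he
  constructor
  · omega
  · intro heq
    exact hkey.2 (by omega)


/-- The rows with a removable node, in beta-set language. -/
def corners : Finset (Fin r) := Finset.univ.filter (fun i => (β i - 1) ∉ Bset β)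

theorem corners_card_le (hr : 0 < r) (hinj : Function.Injective β)
    (hpos : ∀ i, 1 ≤ β i) (e : ℕ) (he : 0 < e)
    (hfull : Finset.univ.image (phi β e) = range r) :
    (corners β).card ≤ 2 * Wgt β e := by
  classical
  set T1 := (corners β).filter (fun i => gaps β e i ≠ 0) with hT1
  set T2 := (corners β).filter (fun i => ¬ gaps β e i ≠ 0) with hT2
  have hsplit : T1.card + T2.card = (corners β).card :=
    Finset.card_filter_add_card_filter_not (p := fun i => gaps β e i ≠ 0)
  have h1 : T1.card ≤ Wgt β e := by
    calc T1.card = ∑ _i ∈ T1, 1 := (Finset.card_eq_sum_ones _)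
      _ ≤ ∑ i ∈ T1, gaps β e i := Finset.sum_le_sum
          (fun i hi => Nat.one_le_iff_ne_zero.mpr (Finset.mem_filter.mp hi).2)
      _ ≤ ∑ i, gaps β e i := Finset.sum_le_sum_of_subset (Finset.subset_univ _)
      _ = Wgt β e := rfl
  have h2 : T2.card ≤ Wgt β e := by
    set S := (Finset.univ : Finset (Fin r)).biUnion
        (fun m => (gapsSet β e m).image (fun g => (m, g))) with hS
    have hdisj : ∀ x ∈ (Finset.univ : Finset (Fin r)), ∀ y ∈ Finset.univ, x ≠ y →
        Disjoint ((gapsSet β e x).image (fun g => (x, g)))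
          ((gapsSet β e y).image (fun g => (y, g))) := by
      intro x _ y _ hxy
      rw [Finset.disjoint_left]
      rintro ⟨m, g⟩ hm hm'
      simp only [Finset.mem_image, Prod.mk.injEq] at hm hm'
      obtain ⟨u, _, hux, _⟩ := hm
      obtain ⟨v, _, hvx, _⟩ := hm'
      exact hxy (hux.trans hvx.symm)
    have hScard : S.card = Wgt β e := by
      rw [hS, Finset.card_biUnion hdisj, Wgt]
      exact Finset.sum_congr rfl (fun m _ =>
        Finset.card_image_of_injective _ (fun a b hab => by simpa using hab))
    have hmain : ∀ i ∈ T2, ∃ m : Fin r, phi β e m = β i - 1 := by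
      intro i hi
      obtain ⟨hicor, hg0⟩ := Finset.mem_filter.mp hi
      rw [not_not] at hg0
      have hphii : phi β e i = β i := by rw [phi, hg0, mul_zero, Nat.sub_zero]
      have hmem : β i ∈ range r := by
        rw [← hfull]
        exact Finset.mem_image.mpr ⟨i, Finset.mem_univ _, hphii⟩
      have hmem2 : β i - 1 ∈ range r := by
        rw [Finset.mem_range] at hmem ⊢
        omega
      rw [← hfull, Finset.mem_image] at hmem2
      obtain ⟨m, _, hm⟩ := hmem2
      exact ⟨m, hm⟩
    set f : Fin r → Fin r × ℕ := fun i =>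
      (if h : ∃ m : Fin r, phi β e m = β i - 1 then h.choose else ⟨0, hr⟩,
        β i - 1) with hf
    have hmaps : ∀ i ∈ T2, f i ∈ S := by
      intro i hi
      have hex := hmain i hi
      obtain ⟨hicor, _⟩ := Finset.mem_filter.mp hi
      have hcor : (β i - 1) ∉ Bset β := by
        simpa [corners] using hicor
      have hm : phi β e (hex.choose) = β i - 1 := hex.choose_spec
      have hfi : f i = (hex.choose, β i - 1) := by
        simp only [hf, dif_pos hex]
      rw [hfi]
      set m := hex.choose with hmm
      have hgap : β i - 1 ∈ gapsSet β e m := by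
        rw [gapsSet, Finset.mem_filter, Finset.mem_range]
        refine ⟨?_, ?_, hcor⟩
        · have hle : phi β e m ≤ β m := by
            have := phi_add β hinj e he m
            omega
          have hbead : β m ∈ Bset β :=
            Finset.mem_image.mpr ⟨m, Finset.mem_univ _, rfl⟩
          have hne : β i - 1 ≠ β m := fun hh => hcor (hh ▸ hbead)
          omega
        · rw [← hm, phi_mod β hinj e he m]
      exact Finset.mem_biUnion.mpr ⟨m, Finset.mem_univ _,
        Finset.mem_image.mpr ⟨β i - 1, hgap, rfl⟩⟩
    have hinjOn : Set.InjOn f T2 := by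
      intro a _ b _ hab
      have h1 : β a - 1 = β b - 1 := congrArg Prod.snd hab
      have ha' := hpos a
      have hb' := hpos b
      exact hinj (by omega)
    calc T2.card ≤ S.card := Finset.card_le_card_of_injOn f hmaps hinjOn
      _ = Wgt β e := hScard
  omega

end Beta



/-- Key arithmetical fact per permutation term. -/
theorem prod_factorial_dvd_term {r n : ℕ} (β : Fin r → ℕ) (t : Fin r → ℕ)
    (hsum : ∑ i, β i = n + ∑ i, t i) :
    (∏ i, Nat.factorial (β i)) ∣
      Nat.factorial n * ∏ i, Nat.descFactorial (β i) (t i) := by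
  by_cases hall : ∀ i, t i ≤ β i
  · have hfac : ∀ i, Nat.factorial (β i - t i) * Nat.descFactorial (β i) (t i)
        = Nat.factorial (β i) := fun i => Nat.factorial_mul_descFactorial (hall i)
    have hsub : ∑ i, (β i - t i) = n := by
      rw [Finset.sum_tsub_distrib Finset.univ (fun i _ => hall i)]
      omega
    have hdvd : (∏ i, Nat.factorial (β i - t i)) ∣ Nat.factorial n := by
      rw [← hsub]
      exact Nat.prod_factorial_dvd_factorial_sum _ _
    obtain ⟨c, hc⟩ := hdvd
    refine ⟨c, ?_⟩
    calc Nat.factorial n * ∏ i, Nat.descFactorial (β i) (t i)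
        = (∏ i, Nat.factorial (β i - t i)) * c
            * ∏ i, Nat.descFactorial (β i) (t i) := by rw [← hc]
      _ = ((∏ i, Nat.factorial (β i - t i))
            * ∏ i, Nat.descFactorial (β i) (t i)) * c := by ring
      _ = (∏ i, (Nat.factorial (β i - t i) * Nat.descFactorial (β i) (t i))) * c := by
            rw [Finset.prod_mul_distrib]
      _ = (∏ i, Nat.factorial (β i)) * c := by
            rw [Finset.prod_congr rfl (fun i _ => hfac i)]
  · push_neg at hall
    obtain ⟨i, hi⟩ := hall
    have h0 : Nat.descFactorial (β i) (t i) = 0 :=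
      Nat.descFactorial_eq_zero_iff_lt.mpr hi
    have hP : ∏ i, Nat.descFactorial (β i) (t i) = 0 :=
      Finset.prod_eq_zero (Finset.mem_univ i) h0
    rw [hP, mul_zero]
    exact dvd_zero _

/-- The product of factorials of the beta numbers divides `n!` times the
Vandermonde-type product. -/
theorem prod_factorial_dvd_vandermonde {r n : ℕ} (β : Fin r → ℕ)
    (hanti : ∀ {i l : Fin r}, i < l → β l < β i)
    (hn : ∑ i, β i = n + ∑ i : Fin r, (i : ℕ)) :
    (∏ i, Nat.factorial (β i)) ∣
      Nat.factorial n * ∏ i, ∏ l ∈ Finset.Ioi i, (β i - β l) := by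
  classical
  set v : Fin r → ℤ := fun i => (β i : ℤ) with hv
  -- determinant of the descPochhammer matrix equals Vandermonde determinant
  have hdet := Matrix.det_eval_matrixOfPolynomials_eq_det_vandermonde v
    (fun i => descPochhammer ℤ (i : ℕ))
    (fun i => descPochhammer_natDegree ℤ (i : ℕ))
    (fun i => monic_descPochhammer ℤ (i : ℕ))
  -- the integer divisibility of n! * det M
  have hdvdM : ((∏ i, Nat.factorial (β i) : ℕ) : ℤ) ∣
      (Nat.factorial n : ℤ) *
        (Matrix.of (fun i j : Fin r =>
          (descPochhammer ℤ (j : ℕ)).eval (v i))).det := by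
    rw [Matrix.det_apply', Finset.mul_sum]
    apply Finset.dvd_sum
    intro σ _
    rw [← mul_assoc, mul_comm ((Nat.factorial n : ℤ)), mul_assoc]
    apply Dvd.dvd.mul_left
    -- the term for σ
    have hterm : ∏ i, (Matrix.of (fun i j : Fin r =>
        (descPochhammer ℤ (j : ℕ)).eval (v i))) (σ i) i
        = ((∏ i, Nat.descFactorial (β (σ i)) (i : ℕ) : ℕ) : ℤ) := by
      rw [Nat.cast_prod]
      apply Finset.prod_congr rfl
      intro i _
      rw [Matrix.of_apply, hv, descPochhammer_eval_eq_descFactorial]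
    rw [hterm, ← Nat.cast_mul]
    rw [Int.natCast_dvd_natCast]
    -- reindex the product over σ
    have hre : ∏ i, Nat.descFactorial (β (σ i)) (i : ℕ)
        = ∏ i, Nat.descFactorial (β i) ((σ.symm i : Fin r) : ℕ) := by
      rw [← Equiv.prod_comp σ (fun i => Nat.descFactorial (β i) ((σ.symm i : Fin r) : ℕ))]
      apply Finset.prod_congr rfl
      intro i _
      rw [Equiv.symm_apply_apply]
    rw [hre]
    apply prod_factorial_dvd_term β (fun i => ((σ.symm i : Fin r) : ℕ))
    rw [hn, Equiv.sum_comp σ.symm (fun i : Fin r => (i : ℕ))]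
  rw [← hdet] at hdvdM
  -- now relate det vandermonde to the natural-number product
  have hvd := Matrix.det_vandermonde v
  set m : ℕ := ∑ i : Fin r, (Finset.Ioi i).card with hm
  have hsign : ((∏ i, ∏ l ∈ Finset.Ioi i, (β i - β l) : ℕ) : ℤ)
      = (-1) ^ m * (Matrix.vandermonde v).det := by
    rw [hvd, hm]
    rw [Nat.cast_prod, ← Finset.prod_pow_eq_pow_sum, ← Finset.prod_mul_distrib]
    apply Finset.prod_congr rfl
    intro i _
    rw [Nat.cast_prod, ← Finset.prod_const, ← Finset.prod_mul_distrib]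
    apply Finset.prod_congr rfl
    intro l hl
    have hlt : β l < β i := hanti (Finset.mem_Ioi.mp hl)
    rw [Nat.cast_sub hlt.le]
    ring
  have : ((∏ i, Nat.factorial (β i) : ℕ) : ℤ) ∣
      ((Nat.factorial n * ∏ i, ∏ l ∈ Finset.Ioi i, (β i - β l) : ℕ) : ℤ) := by
    rw [Nat.cast_mul, hsign, ← mul_assoc, mul_comm ((Nat.factorial n : ℤ)), mul_assoc]
    exact Dvd.dvd.mul_left hdvdM _
  exact_mod_cast this


theorem padicValNat_prod {p : ℕ} [hp : Fact p.Prime] {ι : Type*} (s : Finset ι)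
    (f : ι → ℕ) (hf : ∀ i ∈ s, f i ≠ 0) :
    padicValNat p (∏ i ∈ s, f i) = ∑ i ∈ s, padicValNat p (f i) := by
  classical
  induction s using Finset.cons_induction with
  | empty => simp
  | cons a s ha ih =>
    rw [Finset.prod_cons, Finset.sum_cons,
      padicValNat.mul (hf a (Finset.mem_cons_self a s))
        (Finset.prod_ne_zero_iff.mpr (fun i hi => hf i (Finset.mem_cons_of_mem hi))),
      ih (fun i hi => hf i (Finset.mem_cons_of_mem hi))]

/-- The main abstract theorem: bounding the number of corners of a beta-set. -/
theorem abstract_main {p a k r n : ℕ} (hp : p.Prime) (hk : 1 ≤ k) (ha : 1 ≤ a)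
    (hn : n = a * p ^ k) (β : Fin r → ℕ) (hr : 0 < r)
    (hanti : ∀ {i l : Fin r}, i < l → β l < β i)
    (hpos : ∀ i, 1 ≤ β i)
    (hsum : ∑ i, β i = n + ∑ i : Fin r, (i : ℕ))
    {H : ℕ} (hH : 0 < H)
    (hHV : H * ∏ i, ∏ l ∈ Finset.Ioi i, (β i - β l) = ∏ i, Nat.factorial (β i))
    (hcop : ¬ p ∣ (Nat.factorial n / H)) :
    (corners β).card ≤ 2 * a := by
  classical
  haveI : Fact p.Prime := ⟨hp⟩
  have hp2 : 2 ≤ p := hp.two_le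
  have hinj : Function.Injective β := by
    intro i l h
    by_contra hne
    rcases lt_or_gt_of_ne hne with hlt | hlt
    · exact absurd h (Nat.ne_of_gt (hanti hlt))
    · exact absurd h (Nat.ne_of_lt (hanti hlt))
  set V := ∏ i, ∏ l ∈ Finset.Ioi i, (β i - β l) with hVdef
  have hV : 0 < V := by
    rw [hVdef]
    apply Finset.prod_pos
    intro i _
    apply Finset.prod_pos
    intro l hl
    have := hanti (Finset.mem_Ioi.mp hl)
    omega
  -- H divides n!
  have hdvdnV : (∏ i, Nat.factorial (β i)) ∣ Nat.factorial n * V :=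
    prod_factorial_dvd_vandermonde β (fun {i l} h => hanti h) hsum
  have hHdvd : H ∣ Nat.factorial n := by
    rw [← hHV] at hdvdnV
    obtain ⟨c, hc⟩ := hdvdnV
    refine ⟨c, ?_⟩
    have : Nat.factorial n * V = H * c * V := by
      rw [hc]; ring
    exact Nat.eq_of_mul_eq_mul_right hV this
  set D := Nat.factorial n / H with hDdef
  have hDH : D * H = Nat.factorial n := Nat.div_mul_cancel hHdvd
  have hfacne : Nat.factorial n ≠ 0 := Nat.factorial_ne_zero n
  have hDne : D ≠ 0 := by
    intro h
    rw [h, zero_mul] at hDH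
    exact hfacne hDH.symm
  -- valuations
  have hvD : padicValNat p D = 0 := padicValNat.eq_zero_of_not_dvd hcop
  have hvH : padicValNat p H = padicValNat p (Nat.factorial n) := by
    rw [← hDH, padicValNat.mul hDne hH.ne', hvD, zero_add]
  -- the uniform bound b
  set b := β ⟨0, hr⟩ + n + k + 1 with hb
  have hβle : ∀ i, β i ≤ β ⟨0, hr⟩ := by
    intro i
    rcases Nat.eq_or_lt_of_le (Nat.zero_le i.val) with h0 | h0
    · have : i = ⟨0, hr⟩ := Fin.ext h0.symm
      rw [this]
    · exact le_of_lt (hanti (show (⟨0, hr⟩ : Fin r) < i from h0))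
  have hlogn : Nat.log p n < b := lt_of_le_of_lt (Nat.log_le_self p n) (by omega)
  have hlogβ : ∀ i, Nat.log p (β i) < b := fun i =>
    lt_of_le_of_lt (le_trans (Nat.log_le_self p (β i)) (hβle i)) (by omega)
  have hpowb : ∀ x : ℕ, x ≤ β ⟨0, hr⟩ → x < p ^ b := by
    intro x hx
    calc x ≤ β ⟨0, hr⟩ := hx
      _ < 2 ^ b := by
          have := Nat.lt_two_pow_self (n := b)
          omega
      _ ≤ p ^ b := Nat.pow_le_pow_left hp2 b
  -- Legendre for n!
  have hLn : padicValNat p (Nat.factorial n) = ∑ j ∈ Finset.Ico 1 b, n / p ^ j :=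
    padicValNat_factorial hlogn
  -- valuation of the product of factorials
  have hLprod : padicValNat p (∏ i, Nat.factorial (β i))
      = ∑ j ∈ Finset.Ico 1 b, ∑ i, β i / p ^ j := by
    rw [padicValNat_prod _ _ (fun i _ => Nat.factorial_ne_zero (β i))]
    rw [Finset.sum_comm]
    exact Finset.sum_congr rfl (fun i _ => padicValNat_factorial (hlogβ i))
  -- membership in Ioi vs. being below
  have hIoiBelows : ∀ (e : ℕ) (i : Fin r),
      ((Finset.Ioi i).filter (fun l => e ∣ β i - β l)).card = belows β e i := by
    intro e i
    rw [belows]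
    congr 1
    ext l
    simp only [Finset.mem_filter, Finset.mem_Ioi, Finset.mem_univ, true_and]
    constructor
    · rintro ⟨hil, hdvd⟩
      have hlt := hanti hil
      exact ⟨hlt, (Nat.modEq_iff_dvd' hlt.le).mpr hdvd⟩
    · rintro ⟨hlt, hmod⟩
      have hil : i < l := by
        rcases lt_trichotomy i l with h | h | h
        · exact h
        · subst h; omega
        · exact absurd (hanti h) (by omega)
      exact ⟨hil, (Nat.modEq_iff_dvd' hlt.le).mp hmod⟩
  -- valuation of V
  have hLV : padicValNat p V = ∑ j ∈ Finset.Ico 1 b, Pcnt β (p ^ j) := by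
    rw [hVdef, padicValNat_prod _ _ (fun i _ => (Finset.prod_pos (fun l hl => by
      have := hanti (Finset.mem_Ioi.mp hl); omega)).ne')]
    have hterm : ∀ i : Fin r, padicValNat p (∏ l ∈ Finset.Ioi i, (β i - β l))
        = ∑ j ∈ Finset.Ico 1 b, ((Finset.Ioi i).filter
            (fun l => p ^ j ∣ β i - β l)).card := by
      intro i
      rw [padicValNat_prod _ _ (fun l hl => by
        have := hanti (Finset.mem_Ioi.mp hl); omega)]
      have h1 : ∀ l ∈ Finset.Ioi i, padicValNat p (β i - β l)
          = ((Finset.Ico 1 b).filter (fun j => p ^ j ∣ β i - β l)).card := by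
        intro l hl
        have hlt := hanti (Finset.mem_Ioi.mp hl)
        exact padicValNat_eq_card_dvd hp (by omega)
          (hpowb _ (le_trans (Nat.sub_le _ _) (hβle i)))
      calc ∑ l ∈ Finset.Ioi i, padicValNat p (β i - β l)
          = ∑ l ∈ Finset.Ioi i, ∑ j ∈ Finset.Ico 1 b,
              if p ^ j ∣ β i - β l then 1 else 0 := by
            refine Finset.sum_congr rfl (fun l hl => ?_)
            rw [h1 l hl, Finset.card_filter]
        _ = ∑ j ∈ Finset.Ico 1 b, ∑ l ∈ Finset.Ioi i,
              if p ^ j ∣ β i - β l then 1 else 0 := Finset.sum_comm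
        _ = ∑ j ∈ Finset.Ico 1 b, ((Finset.Ioi i).filter
              (fun l => p ^ j ∣ β i - β l)).card := by
            exact Finset.sum_congr rfl (fun j _ => (Finset.card_filter _ _).symm)
    calc ∑ i, padicValNat p (∏ l ∈ Finset.Ioi i, (β i - β l))
        = ∑ i, ∑ j ∈ Finset.Ico 1 b, ((Finset.Ioi i).filter
            (fun l => p ^ j ∣ β i - β l)).card :=
          Finset.sum_congr rfl (fun i _ => hterm i)
      _ = ∑ j ∈ Finset.Ico 1 b, ∑ i, ((Finset.Ioi i).filter
            (fun l => p ^ j ∣ β i - β l)).card := Finset.sum_comm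
      _ = ∑ j ∈ Finset.Ico 1 b, Pcnt β (p ^ j) := by
          refine Finset.sum_congr rfl (fun j _ => ?_)
          rw [Pcnt]
          exact Finset.sum_congr rfl (fun i _ => hIoiBelows (p ^ j) i)
  -- putting the valuations together
  have hHVval : padicValNat p H + padicValNat p V
      = padicValNat p (∏ i, Nat.factorial (β i)) := by
    rw [← padicValNat.mul hH.ne' hV.ne', hHV]
  have hdivsplit : ∀ j ∈ Finset.Ico 1 b, ∑ i, β i / p ^ j
      = Wgt β (p ^ j) + Pcnt β (p ^ j) := by
    intro j _
    rw [Wgt, Pcnt, ← Finset.sum_add_distrib]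
    exact Finset.sum_congr rfl
      (fun i _ => div_eq_gaps_add_belows β hinj (p ^ j) (pow_pos hp.pos j) i)
  have hWsum : ∑ j ∈ Finset.Ico 1 b, Wgt β (p ^ j)
      = ∑ j ∈ Finset.Ico 1 b, n / p ^ j := by
    have h2 : ∑ j ∈ Finset.Ico 1 b, ∑ i, β i / p ^ j
        = ∑ j ∈ Finset.Ico 1 b, Wgt β (p ^ j)
          + ∑ j ∈ Finset.Ico 1 b, Pcnt β (p ^ j) := by
      rw [← Finset.sum_add_distrib]
      exact Finset.sum_congr rfl hdivsplit
    have h3 := hHVval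
    rw [hLprod, hLV] at h3
    rw [hvH, hLn] at h3
    omega
  have hWle : ∀ j ∈ Finset.Ico 1 b, Wgt β (p ^ j) ≤ n / p ^ j := by
    intro j _
    rw [Nat.le_div_iff_mul_le (pow_pos hp.pos j), mul_comm]
    exact (wgt_le_and_eq β hinj hsum (p ^ j) (pow_pos hp.pos j)).1
  have heach := (Finset.sum_eq_sum_iff_of_le hWle).mp hWsum
  have hkmem : k ∈ Finset.Ico 1 b := Finset.mem_Ico.mpr ⟨hk, by omega⟩
  have hWk : Wgt β (p ^ k) = a := by
    have := heach k hkmem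
    rw [hn, Nat.mul_div_cancel _ (pow_pos hp.pos k)] at this
    exact this
  have hfull : Finset.univ.image (phi β (p ^ k)) = Finset.range r := by
    apply (wgt_le_and_eq β hinj hsum (p ^ k) (pow_pos hp.pos k)).2
    rw [hWk, hn]
    ring
  calc (corners β).card ≤ 2 * Wgt β (p ^ k) :=
        corners_card_le β hr hinj hpos (p ^ k) (pow_pos hp.pos k) hfull
    _ = 2 * a := by rw [hWk]

/-- beta numbers of a Young diagram with `r` rows -/
def ybeta (Y : YoungDiagram) (r : ℕ) (i : Fin r) : ℕ :=
  Y.rowLen i + (r - 1 - i.val)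

variable {Y : YoungDiagram} {r : ℕ}

theorem ycells_eq (hcol : Y.colLen 0 = r) :
    Y.cells = (range r).biUnion (fun i => Y.row i) := by
  ext c
  simp only [Finset.mem_biUnion, Finset.mem_range, YoungDiagram.mem_row_iff,
    YoungDiagram.mem_cells]
  constructor
  · intro hc
    refine ⟨c.1, ?_, hc, rfl⟩
    rw [← hcol, ← YoungDiagram.mem_iff_lt_colLen]
    exact Y.up_left_mem (le_refl _) (Nat.zero_le _) (by simpa using hc)
  · rintro ⟨i, _, hc, _⟩
    exact hc

theorem yrows_disjoint {i j : ℕ} (hij : i ≠ j) :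
    Disjoint (Y.row i) (Y.row j) := by
  rw [Finset.disjoint_left]
  intro c hc hc'
  rw [YoungDiagram.mem_row_iff] at hc hc'
  exact hij (hc.2 ▸ hc'.2)

theorem yprod_eq (hcol : Y.colLen 0 = r) (f : ℕ × ℕ → ℕ) :
    ∏ c ∈ Y.cells, f c = ∏ i ∈ range r, ∏ j ∈ range (Y.rowLen i), f (i, j) := by
  rw [ycells_eq hcol, Finset.prod_biUnion]
  · refine Finset.prod_congr rfl (fun i _ => ?_)
    rw [YoungDiagram.row_eq_prod, Finset.singleton_product, Finset.prod_map]
    rfl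
  · exact fun x _ y _ hxy => yrows_disjoint hxy

theorem ycard_eq (hcol : Y.colLen 0 = r) :
    Y.card = ∑ i ∈ range r, Y.rowLen i := by
  rw [YoungDiagram.card, ycells_eq hcol, Finset.card_biUnion
    (fun x _ y _ hxy => yrows_disjoint hxy)]
  exact Finset.sum_congr rfl (fun i _ => (Y.rowLen_eq_card).symm)

theorem yrow_pos (hcol : Y.colLen 0 = r) (i : Fin r) : 0 < Y.rowLen i.val := by
  rw [← YoungDiagram.mem_iff_lt_rowLen]
  rw [YoungDiagram.mem_iff_lt_colLen, hcol]
  exact i.isLt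

theorem ybeta_anti (hcol : Y.colLen 0 = r) {i l : Fin r} (h : i < l) :
    ybeta Y r l < ybeta Y r i := by
  have h1 : Y.rowLen l ≤ Y.rowLen i := Y.rowLen_anti _ _ (le_of_lt h)
  have h2 : l.val < r := l.isLt
  have h3 : i.val < l.val := h
  rw [ybeta, ybeta]
  omega

theorem ybeta_pos (hcol : Y.colLen 0 = r) (i : Fin r) : 1 ≤ ybeta Y r i := by
  have := yrow_pos hcol i
  rw [ybeta]
  omega

theorem ysum_beta (hcol : Y.colLen 0 = r) :
    ∑ i, ybeta Y r i = Y.card + ∑ i : Fin r, (i : ℕ) := by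
  calc ∑ i : Fin r, ybeta Y r i
      = ∑ i : Fin r, (Y.rowLen i + (r - 1 - (i : ℕ))) := rfl
    _ = ∑ i : Fin r, Y.rowLen i + ∑ i : Fin r, (r - 1 - (i : ℕ)) :=
        Finset.sum_add_distrib
    _ = Y.card + ∑ i : Fin r, (i : ℕ) := by
        rw [ycard_eq hcol, ← Fin.sum_univ_eq_sum_range (fun i => Y.rowLen i) r]
        congr 1
        rw [Fin.sum_univ_eq_sum_range (fun i => r - 1 - i) r,
          Fin.sum_univ_eq_sum_range (fun i => (i : ℕ)) r]
        exact Finset.sum_range_reflect (fun i => i) r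

/-- The per-row hook length identity. -/
theorem yrow_hook (hcol : Y.colLen 0 = r) (i : Fin r) :
    (∏ j ∈ range (Y.rowLen i), hookLength Y i j)
      * (∏ l ∈ Finset.Ioi i, (ybeta Y r i - ybeta Y r l))
      = Nat.factorial (ybeta Y r i) := by
  classical
  set m := ybeta Y r i with hm
  set lam := Y.rowLen i.val with hlam
  set gam : ℕ → ℕ := fun j => j + (r - Y.colLen j) with hgam
  have hcolle : ∀ j, Y.colLen j ≤ r := fun j => hcol ▸ Y.colLen_anti 0 j (Nat.zero_le j)
  have hcell : ∀ j, j < lam → i.val < Y.colLen j := by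
    intro j hj
    rw [← YoungDiagram.mem_iff_lt_colLen]
    rw [YoungDiagram.mem_iff_lt_rowLen]
    exact hj
  have hir : i.val < r := i.isLt
  -- γ values are small
  have hgamlt : ∀ j, j < lam → gam j < m := by
    intro j hj
    have h1 := hcell j hj
    have h2 := hcolle j
    rw [hgam, hm, ybeta]
    simp only []
    omega
  -- hooks are the complementary values
  have hhook : ∀ j, j < lam → hookLength Y i j = m - gam j := by
    intro j hj
    have h1 := hcell j hj
    have h2 := hcolle j
    rw [hookLength, hgam, hm, ybeta]
    simp only []
    omega
  -- γ is strictly monotone below lam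
  have hgammono : ∀ j j', j < j' → j' < lam → gam j < gam j' := by
    intro j j' hjj hj'
    have h1 : Y.colLen j' ≤ Y.colLen j := Y.colLen_anti _ _ (le_of_lt hjj)
    have h2 := hcolle j
    have h3 := hcolle j'
    rw [hgam]
    simp only []
    omega
  -- γ values differ from β values
  have hgamne : ∀ j, j < lam → ∀ l : Fin r, i < l → gam j ≠ ybeta Y r l := by
    intro j hj l hil
    have hlr : l.val < r := l.isLt
    by_cases hcl : (l.val, j) ∈ Y
    · have h1 : j < Y.rowLen l.val := YoungDiagram.mem_iff_lt_rowLen.mp hcl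
      have h2 : l.val < Y.colLen j := YoungDiagram.mem_iff_lt_colLen.mp hcl
      have h3 := hcolle j
      rw [hgam, ybeta]
      simp only []
      omega
    · have h1 : Y.rowLen l.val ≤ j := by
        by_contra hlt
        exact hcl (YoungDiagram.mem_iff_lt_rowLen.mpr (by omega))
      have h2 : Y.colLen j ≤ l.val := by
        by_contra hlt
        exact hcl (YoungDiagram.mem_iff_lt_colLen.mpr (by omega))
      have h3 := hcolle j
      have h4 : (i : ℕ) < l.val := hil
      rw [hgam, ybeta]
      simp only []
      omega
  -- the two image sets
  set G : Finset ℕ := (range lam).image gam with hG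
  set B : Finset ℕ := (Finset.Ioi i).image (fun l => ybeta Y r l) with hB
  have hGcard : G.card = lam := by
    rw [hG, Finset.card_image_of_injOn, Finset.card_range]
    intro x hx y hy hxy
    rw [Finset.mem_coe, Finset.mem_range] at hx hy
    by_contra hne
    rcases lt_or_gt_of_ne hne with h | h
    · exact absurd hxy (Nat.ne_of_lt (hgammono x y h hy))
    · exact absurd hxy (Nat.ne_of_gt (hgammono y x h hx))
  have hBcard : B.card = r - 1 - i.val := by
    rw [hB, Finset.card_image_of_injOn, Fin.card_Ioi]
    intro x hx y hy hxy
    by_contra hne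
    rcases lt_or_gt_of_ne hne with h | h
    · exact absurd hxy (Nat.ne_of_gt (ybeta_anti hcol h))
    · exact absurd hxy (Nat.ne_of_lt (ybeta_anti hcol h))
  have hdisj : Disjoint G B := by
    rw [Finset.disjoint_left]
    intro x hx hx'
    rw [hG, Finset.mem_image] at hx
    rw [hB, Finset.mem_image] at hx'
    obtain ⟨j, hj, rfl⟩ := hx
    obtain ⟨l, hl, hlx⟩ := hx'
    rw [Finset.mem_range] at hj
    exact hgamne j hj l (Finset.mem_Ioi.mp hl) hlx.symm
  have hsub : G ∪ B ⊆ range m := by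
    intro x hx
    rw [Finset.mem_union] at hx
    rw [Finset.mem_range]
    rcases hx with hx | hx
    · rw [hG, Finset.mem_image] at hx
      obtain ⟨j, hj, rfl⟩ := hx
      exact hgamlt j (Finset.mem_range.mp hj)
    · rw [hB, Finset.mem_image] at hx
      obtain ⟨l, hl, rfl⟩ := hx
      exact ybeta_anti hcol (Finset.mem_Ioi.mp hl)
  have hunion : G ∪ B = range m := by
    apply Finset.eq_of_subset_of_card_le hsub
    rw [Finset.card_range, Finset.card_union_of_disjoint hdisj, hGcard, hBcard]
    rw [hm, ybeta, hlam]
  -- the factorial as a product over the range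
  have hfact : ∏ x ∈ range m, (m - x) = Nat.factorial m := by
    calc ∏ x ∈ range m, (m - x)
        = ∏ x ∈ range m, ((fun y => y + 1) (m - 1 - x)) := by
          refine Finset.prod_congr rfl (fun x hx => ?_)
          rw [Finset.mem_range] at hx
          simp only []
          omega
      _ = ∏ x ∈ range m, (x + 1) := Finset.prod_range_reflect (fun y => y + 1) m
      _ = Nat.factorial m := Finset.prod_range_add_one_eq_factorial m
  -- split the product
  rw [← hfact, ← hunion, Finset.prod_union hdisj]
  congr 1
  · rw [hG, Finset.prod_image (fun x hx y hy hxy => by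
      rw [Finset.mem_coe, Finset.mem_range] at hx hy
      by_contra hne
      rcases lt_or_gt_of_ne hne with h | h
      · exact absurd hxy (Nat.ne_of_lt (hgammono x y h hy))
      · exact absurd hxy (Nat.ne_of_gt (hgammono y x h hx)))]
    exact Finset.prod_congr rfl (fun j hj => hhook j (Finset.mem_range.mp hj))
  · rw [hB, Finset.prod_image (fun x hx y hy hxy => by
      by_contra hne
      rcases lt_or_gt_of_ne hne with h | h
      · exact absurd hxy (Nat.ne_of_gt (ybeta_anti hcol h))
      · exact absurd hxy (Nat.ne_of_lt (ybeta_anti hcol h)))]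

/-- The global hook product identity. -/
theorem yhook_prod (hcol : Y.colLen 0 = r) :
    (∏ c ∈ Y.cells, hookLength Y c.1 c.2)
      * (∏ i, ∏ l ∈ Finset.Ioi i, (ybeta Y r i - ybeta Y r l))
      = ∏ i, Nat.factorial (ybeta Y r i) := by
  rw [yprod_eq hcol, ← Fin.prod_univ_eq_prod_range (fun i => ∏ j ∈ range (Y.rowLen i), hookLength Y i j) r,
    ← Finset.prod_mul_distrib]
  exact Finset.prod_congr rfl (fun i _ => yrow_hook hcol i)

theorem yminus_maps (hcol : Y.colLen 0 = r) {Z : YoungDiagram} (hZ : Z ∈ Yminus Y)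
    {c : ℕ × ℕ} (hc : Y.cells \ Z.cells = {c}) :
    ∃ h : c.1 < r, (⟨c.1, h⟩ : Fin r) ∈ corners (ybeta Y r)
      ∧ c.2 = Y.rowLen c.1 - 1 ∧ Z.cells = Y.cells.erase c := by
  obtain ⟨hZsub, hZcard⟩ := hZ
  have hcY : c ∈ Y.cells ∧ c ∉ Z.cells := by
    have : c ∈ Y.cells \ Z.cells := by rw [hc]; exact Finset.mem_singleton_self c
    exact Finset.mem_sdiff.mp this
  have hcmem : (c.1, c.2) ∈ Y := by
    rw [← YoungDiagram.mem_cells, Prod.mk.eta]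
    exact hcY.1
  have h1 : c.1 < r := by
    rw [← hcol, ← YoungDiagram.mem_iff_lt_colLen]
    exact Y.up_left_mem (le_refl _) (Nat.zero_le _) hcmem
  have hZerase : Z.cells = Y.cells.erase c := by
    rw [Finset.erase_eq, ← hc, Finset.sdiff_sdiff_eq_self hZsub]
  have hcrow : c.2 < Y.rowLen c.1 := YoungDiagram.mem_iff_lt_rowLen.mp hcmem
  have hlast : c.2 + 1 = Y.rowLen c.1 := by
    by_contra hne
    have h2 : c.2 + 1 < Y.rowLen c.1 := by omega
    have h3 : (c.1, c.2 + 1) ∈ Z := by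
      rw [← YoungDiagram.mem_cells, hZerase, Finset.mem_erase]
      constructor
      · intro hcc
        have := congrArg Prod.snd hcc
        simp only [] at this
        omega
      · rw [YoungDiagram.mem_cells, YoungDiagram.mem_iff_lt_rowLen]
        exact h2
    have h4 : (c.1, c.2) ∈ Z := Z.up_left_mem (le_refl _) (Nat.le_succ _) h3
    rw [← YoungDiagram.mem_cells] at h4
    rw [Prod.mk.eta] at h4
    exact hcY.2 h4
  refine ⟨h1, ?_, by omega, hZerase⟩
  rw [corners, Finset.mem_filter]
  refine ⟨Finset.mem_univ _, ?_⟩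
  rw [Bset, Finset.mem_image]
  rintro ⟨l, -, hβl⟩
  set i₀ : Fin r := ⟨c.1, h1⟩ with hi₀
  have hpos := ybeta_pos hcol i₀
  have hlt : ybeta Y r l < ybeta Y r i₀ := by omega
  have hi₀l : i₀ < l := by
    rcases lt_trichotomy i₀ l with h | h | h
    · exact h
    · rw [h] at hlt; omega
    · exact absurd (ybeta_anti hcol h) (by omega)
  have hlval : l.val = c.1 + 1 := by
    have : (i₀ : ℕ) < l.val := hi₀l
    by_contra hne
    have h2 : c.1 + 1 < l.val := by
      simp only [hi₀] at this
      omega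
    have hm : c.1 + 1 < r := lt_trans h2 l.isLt
    set m : Fin r := ⟨c.1 + 1, hm⟩ with hmm
    have ha1 : ybeta Y r l < ybeta Y r m := ybeta_anti hcol (by exact h2)
    have ha2 : ybeta Y r m < ybeta Y r i₀ := ybeta_anti hcol (by
      show (i₀ : ℕ) < (m : ℕ)
      simp only [hi₀, hmm]
      omega)
    omega
  have hrowll : Y.rowLen l.val = Y.rowLen c.1 := by
    have hβl' := hβl
    rw [ybeta, ybeta] at hβl'
    simp only [hi₀] at hβl'
    have hlr : l.val < r := l.isLt
    omega
  have h5 : (l.val, c.2) ∈ Z := by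
    rw [← YoungDiagram.mem_cells, hZerase, Finset.mem_erase]
    constructor
    · intro hcc
      have := congrArg Prod.fst hcc
      simp only [] at this
      omega
    · rw [YoungDiagram.mem_cells, YoungDiagram.mem_iff_lt_rowLen, hrowll]
      omega
  have h6 : (c.1, c.2) ∈ Z := Z.up_left_mem (by omega) (le_refl _) h5
  rw [← YoungDiagram.mem_cells, Prod.mk.eta] at h6
  exact hcY.2 h6

theorem yminus_ncard_le (hcol : Y.colLen 0 = r) (hr : 0 < r)
    (S : Set YoungDiagram) (hS : S ⊆ Yminus Y) :
    S.ncard ≤ (corners (ybeta Y r)).card := by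
  classical
  have hsdiff : ∀ Z ∈ Yminus Y, ∃ c : ℕ × ℕ, Y.cells \ Z.cells = {c} := by
    intro Z hZ
    obtain ⟨hZsub, hZcard⟩ := hZ
    apply Finset.card_eq_one.mp
    rw [Finset.card_sdiff_of_subset hZsub]
    have h2 : Z.cells.card + 1 = Y.cells.card := hZcard
    omega
  set f : YoungDiagram → Fin r := fun Z =>
    if h : ∃ c : ℕ × ℕ, Y.cells \ Z.cells = {c} ∧ c.1 < r
    then ⟨h.choose.1, h.choose_spec.2⟩ else ⟨0, hr⟩ with hf
  have hex : ∀ Z ∈ Yminus Y, ∃ c : ℕ × ℕ, Y.cells \ Z.cells = {c} ∧ c.1 < r := by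
    intro Z hZ
    obtain ⟨c, hc⟩ := hsdiff Z hZ
    obtain ⟨h1, -, -, -⟩ := yminus_maps hcol hZ hc
    exact ⟨c, hc, h1⟩
  have hfspec : ∀ Z, (hZ : Z ∈ Yminus Y) → ∃ c : ℕ × ℕ,
      Y.cells \ Z.cells = {c} ∧ (f Z : ℕ) = c.1 := by
    intro Z hZ
    have h := hex Z hZ
    refine ⟨h.choose, h.choose_spec.1, ?_⟩
    rw [hf]
    simp only [dif_pos h]
  have hmaps : ∀ Z ∈ S, f Z ∈ (↑(corners (ybeta Y r)) : Set (Fin r)) := by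
    intro Z hZS
    have hZ := hS hZS
    obtain ⟨c, hc, hfc⟩ := hfspec Z hZ
    obtain ⟨h1, hcor, -, -⟩ := yminus_maps hcol hZ hc
    rw [Finset.mem_coe]
    have : f Z = (⟨c.1, h1⟩ : Fin r) := Fin.ext hfc
    rw [this]
    exact hcor
  have hinj : Set.InjOn f S := by
    intro Z hZS Z' hZS' hff
    have hZ := hS hZS
    have hZ' := hS hZS'
    obtain ⟨c, hc, hfc⟩ := hfspec Z hZ
    obtain ⟨c', hc', hfc'⟩ := hfspec Z' hZ'
    obtain ⟨h1, -, hc2, hZe⟩ := yminus_maps hcol hZ hc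
    obtain ⟨h1', -, hc2', hZe'⟩ := yminus_maps hcol hZ' hc'
    have hr1 : c.1 = c'.1 := by
      rw [← hfc, hff, hfc']
    have hcc : c = c' := by
      apply Prod.ext hr1
      rw [hc2, hc2', hr1]
    apply YoungDiagram.ext
    rw [hZe, hZe', hcc]
  calc S.ncard ≤ (↑(corners (ybeta Y r)) : Set (Fin r)).ncard :=
        Set.ncard_le_ncard_of_injOn f hmaps hinj (Set.toFinite _)
    _ = (corners (ybeta Y r)).card := Set.ncard_coe_finset _

end BrApk

/-- For a prime `p`, `k ≥ 1` and `1 ≤ a ≤ p - 1`, every `p'`-partition `λ` of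
`a·p^k` satisfies `|λ⁻_{p'}| ≤ 2a`; in particular `br (a·p^k) ≤ 2a`. -/
theorem br_apk_le (p a k : ℕ) (hp : p.Prime) (hk : 1 ≤ k)
    (ha : 1 ≤ a) (ha' : a ≤ p - 1) :
    (∀ Y : YoungDiagram, Y.card = a * p ^ k → CoprimeDeg p Y →
      (YminusP p Y).ncard ≤ 2 * a) ∧
      br p (a * p ^ k) ≤ 2 * a := by
  classical
  have hmain : ∀ Y : YoungDiagram, Y.card = a * p ^ k → CoprimeDeg p Y →
      (YminusP p Y).ncard ≤ 2 * a := by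
    intro Y hcard hcop
    set r := Y.colLen 0 with hrdef
    have hcol : Y.colLen 0 = r := rfl
    have hn0 : 0 < Y.card := by
      rw [hcard]
      exact Nat.mul_pos (by omega) (pow_pos hp.pos k)
    have hr : 0 < r := by
      obtain ⟨c, hc⟩ := Finset.card_pos.mp hn0
      rw [← hcol, ← YoungDiagram.mem_iff_lt_colLen]
      refine Y.up_left_mem (Nat.zero_le c.1) (Nat.zero_le c.2) ?_
      rw [Prod.mk.eta]
      exact (YoungDiagram.mem_cells _).mp hc
    set H := ∏ c ∈ Y.cells, hookLength Y c.1 c.2 with hHdef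
    have hH : 0 < H := by
      rw [hHdef]
      apply Finset.prod_pos
      intro c hc
      have hc' : (c.1, c.2) ∈ Y := by
        rw [Prod.mk.eta]
        exact (YoungDiagram.mem_cells _).mp hc
      have h1 : c.2 < Y.rowLen c.1 := YoungDiagram.mem_iff_lt_rowLen.mp hc'
      have h2 : c.1 < Y.colLen c.2 := YoungDiagram.mem_iff_lt_colLen.mp hc'
      rw [hookLength]
      omega
    have hcop' : ¬ p ∣ Nat.factorial (a * p ^ k) / H := by
      have h := hcop
      rw [CoprimeDeg, charDegree, hcard] at h
      rw [← hHdef] at h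
      exact h
    have hcorn := BrApk.abstract_main (n := a * p ^ k) hp hk ha rfl
      (BrApk.ybeta Y r) hr (fun {i l} h => BrApk.ybeta_anti hcol h)
      (BrApk.ybeta_pos hcol)
      (by rw [BrApk.ysum_beta hcol, hcard]) hH (BrApk.yhook_prod hcol) hcop'
    calc (YminusP p Y).ncard ≤ (BrApk.corners (BrApk.ybeta Y r)).card :=
          BrApk.yminus_ncard_le hcol hr _ (fun Z hZ => hZ.1)
      _ ≤ 2 * a := hcorn
  refine ⟨hmain, ?_⟩
  rcases Set.eq_empty_or_nonempty {m | ∃ Y : YoungDiagram,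
      Y.card = a * p ^ k ∧ CoprimeDeg p Y ∧ m = (YminusP p Y).ncard} with hS | hS
  · rw [br, hS, csSup_empty]
    exact Nat.zero_le _
  · rw [br]
    apply csSup_le hS
    rintro m ⟨Y, hY1, hY2, rfl⟩
    exact hmain Y hY1 hY2
end
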